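/- arXiv:2604.14331 — 6 statements merged into one kernel-verified Lean document; each statement's English description precedes it below -/
import Mathlib

section
/- Let G be a finite group, H ≤ G a subgroup, and χ the character of an irreducible finite-dimensional complex representation of G such that (1/|H|) Σ_{h ∈ H} χ(h) = 1. Define φ(g) := (1/|H|) Σ_{h ∈ H} χ(h * g). Then φ satisfies the zonal spherical function equation: for all g₁, g₂ ∈ G, (1/|H|) Σ_{h ∈ H} φ(g₁ * h * g₂) = φ(g₁) * φ(g₂). -/
/-!
Let `P = (1/|H|) Σ_{h ∈ H} ρ(h)`, the projection onto the `H`-invariant vectors, so that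
`φ(g) = tr (P ρ(g))`. The hypothesis says `tr P = 1`: the invariants form a line, so the compression
`P A P` of any endomorphism `A` is the scalar `tr (P A)` times `P`. Averaging over `H` turns the
left-hand side into `tr (P ρ(g₁) P ρ(g₂)) = tr (P ρ(g₁)) tr (P ρ(g₂)) = φ(g₁) φ(g₂)`.
-/

/-- The `H`-averaged character `φ_χ(g) = (1/|H|) Σ_{h ∈ H} χ(h * g)`. -/
noncomputable def avgChar {G : Type} [Group G] (H : Subgroup G) [Fintype H] (χ : G → ℂ) (g : G) : ℂ :=
  (1 : ℂ) / (Fintype.card H : ℂ) * ∑ h : H, χ ((h : G) * g)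

open LinearMap Module Representation

theorem IsIdempotentElem.mul_mul_eq_trace_mul_smul_of_trace_eq_one {K V : Type*} [Field K]
    [CharZero K] [AddCommGroup V] [Module K V] [FiniteDimensional K V] {P : Module.End K V}
    (hP : IsIdempotentElem P) (htr : trace K V P = 1) (A : Module.End K V) :
    P * A * P = trace K V (P * A) • P := by
  have hproj := hP.isProj_range
  have hrank : finrank K (range P) = 1 := by
    rw [hproj.trace] at htr
    exact_mod_cast htr
  obtain ⟨c, hc, -⟩ := existsUnique_eq_smul_id_of_finrank_eq_one hrank
    (hproj.codRestrict ∘ₗ A ∘ₗ (range P).subtype)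
  have hPAP : P * A * P = c • P := by
    ext v
    have hv := congr((range P).subtype ($hc (hproj.codRestrict v)))
    simpa [hproj.codRestrict_apply_cod] using hv
  have htrPAP : trace K V (P * A * P) = trace K V (P * A) := by
    rw [trace_mul_comm, ← mul_assoc, hP.eq]
  rw [hPAP, map_smul, htr, smul_eq_mul, mul_one] at htrPAP
  rwa [← htrPAP]

namespace Representation

variable {k G V : Type*} [CommRing k] [Group G] [AddCommGroup V] [Module k V]

theorem averageMap_comp_subtype_mul (ρ : Representation k G V) (H : Subgroup G) [Fintype H]
    [Invertible (Fintype.card H : k)] (g : G) :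
    averageMap (ρ.comp H.subtype) * ρ g = ⅟(Fintype.card H : k) • ∑ h : H, ρ (h * g) := by
  simp [averageMap, GroupAlgebra.average, map_sum, Finset.sum_mul]

end Representation

theorem avgChar_eq_trace_averageMap_mul {G : Type} [Group G] (H : Subgroup G) [Fintype H]
    [Invertible (Fintype.card H : ℂ)] (V : FDRep ℂ G) (g : G) :
    avgChar H V.character g = trace ℂ V (averageMap (V.ρ.comp H.subtype) * V.ρ g) := by
  rw [averageMap_comp_subtype_mul, map_smul, map_sum, avgChar, invOf_eq_inv, one_div, smul_eq_mul]
  rfl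

theorem avgChar_zonal_spherical_equation_general (G : Type) [Group G]
    (H : Subgroup G) [Fintype H] (V : FDRep ℂ G)
    (hmult : (1 : ℂ) / (Fintype.card H : ℂ) * ∑ h : H, V.character (h : G) = 1) :
    ∀ g₁ g₂ : G,
      (1 : ℂ) / (Fintype.card H : ℂ) *
          ∑ h : H, avgChar H V.character (g₁ * (h : G) * g₂)
        = avgChar H V.character g₁ * avgChar H V.character g₂ := by
  intro g₁ g₂
  have : Invertible (Fintype.card H : ℂ) := invertibleOfNonzero (by simp)
  set P := averageMap (V.ρ.comp H.subtype)
  have hP : IsIdempotentElem P := (isProj_averageMap _).isIdempotentElem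
  have htr : trace ℂ V P = 1 := by
    rw [← mul_one P, ← map_one V.ρ, ← avgChar_eq_trace_averageMap_mul]
    simpa only [avgChar, mul_one] using hmult
  calc (1 : ℂ) / (Fintype.card H : ℂ) * ∑ h : H, avgChar H V.character (g₁ * (h : G) * g₂)
      = trace ℂ V (P * V.ρ g₁ * (P * V.ρ g₂)) := by
        rw [show P * V.ρ g₂ = _ from averageMap_comp_subtype_mul V.ρ H g₂, mul_smul_comm,
          Finset.mul_sum _ _ (P * V.ρ g₁), map_smul, map_sum, smul_eq_mul, invOf_eq_inv, one_div]
        simp only [avgChar_eq_trace_averageMap_mul, mul_assoc, ← map_mul, P]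
    _ = trace ℂ V (P * V.ρ g₁) * trace ℂ V (P * V.ρ g₂) := by
        rw [← mul_assoc, hP.mul_mul_eq_trace_mul_smul_of_trace_eq_one htr, smul_mul_assoc, map_smul,
          smul_eq_mul]
    _ = avgChar H V.character g₁ * avgChar H V.character g₂ := by
        rw [avgChar_eq_trace_averageMap_mul, avgChar_eq_trace_averageMap_mul]

/-- If `χ` is an irreducible character of a finite group `G` such that the
trivial representation occurs with multiplicity exactly one in the restriction to `H`
(i.e. `(1/|H|) Σ_{h ∈ H} χ(h) = 1`), then the `H`-averaged character `φ` satisfies the zonal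
spherical function equation `(1/|H|) Σ_{h ∈ H} φ(g₁ h g₂) = φ(g₁) φ(g₂)`. -/
theorem avgChar_zonal_spherical_equation (G : Type) [Group G] [Fintype G]
    (H : Subgroup G) [Fintype H] (V : FDRep ℂ G) (hV : CategoryTheory.Simple V)
    (hmult : (1 : ℂ) / (Fintype.card H : ℂ) * ∑ h : H, V.character (h : G) = 1) :
    ∀ g₁ g₂ : G,
      (1 : ℂ) / (Fintype.card H : ℂ) *
          ∑ h : H, avgChar H V.character (g₁ * (h : G) * g₂)
        = avgChar H V.character g₁ * avgChar H V.character g₂ :=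
  avgChar_zonal_spherical_equation_general G H V hmult
end

section
/- Let n ≥ 1, let S_{2n} = Equiv.Perm (Fin (2n)), let x₀ be the base matching (fixed-point-free involution pairing 2i with 2i+1), and let H be the stabilizer of x₀ under conjugation. Then (S_{2n}, H) is a Gelfand pair in the multiplicity sense: for every irreducible finite-dimensional complex representation of S_{2n} with character χ, the value (1/|H|) Σ_{h ∈ H} χ(h) is either 0 or 1 (i.e., the trivial representation occurs in the restriction to H with multiplicity at most one). -/
/-- The function pairing `2i` with `2i+1` on `Fin (2*n)`. -/
def bmFun (n : ℕ) (i : Fin (2 * n)) : Fin (2 * n) :=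
  ⟨if i.val % 2 = 0 then i.val + 1 else i.val - 1, by
    have := i.isLt; split <;> omega⟩

lemma bmFun_involutive (n : ℕ) : Function.Involutive (bmFun n) := by
  intro i
  have hi := i.isLt
  unfold bmFun
  apply Fin.ext
  simp only
  split_ifs <;> omega

/-- The base matching on `2*n` points, pairing `2i` with `2i+1`. -/
def baseMatching (n : ℕ) : Equiv.Perm (Fin (2 * n)) :=
  Function.Involutive.toPerm (bmFun n) (bmFun_involutive n)

lemma baseMatching_sq (n : ℕ) : baseMatching n * baseMatching n = 1 := by
  ext i
  exact congrArg Fin.val (bmFun_involutive n i)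

lemma baseMatching_fpf (n : ℕ) : ∀ i, baseMatching n i ≠ i := by
  intro i h
  have hi := i.isLt
  have h3 : (if i.val % 2 = 0 then i.val + 1 else i.val - 1) = i.val := congrArg Fin.val h
  split at h3 <;> omega

/-- The set of matchings on `2*n` points: fixed-point-free involutions of `Fin (2*n)`. -/
abbrev MatchingSet (n : ℕ) :=
  {x : Equiv.Perm (Fin (2 * n)) // x * x = 1 ∧ ∀ i, x i ≠ i}

/-- Conjugation action of the symmetric group on matchings. -/
def conjM {n : ℕ} (σ : Equiv.Perm (Fin (2 * n))) (x : MatchingSet n) : MatchingSet n :=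
  ⟨σ * x.1 * σ⁻¹, by
    constructor
    · have hx := x.2.1
      have h1 : σ * x.1 * σ⁻¹ * (σ * x.1 * σ⁻¹) = σ * (x.1 * x.1) * σ⁻¹ := by group
      rw [h1, hx]
      simp
    · intro i hi
      apply x.2.2 (σ⁻¹ i)
      have h1 : σ (x.1 (σ⁻¹ i)) = i := hi
      have h2 := congrArg (⇑σ⁻¹) h1
      simpa using h2⟩

/-- The base matching as an element of the set of matchings. -/
def baseM (n : ℕ) : MatchingSet n := ⟨baseMatching n, baseMatching_sq n, baseMatching_fpf n⟩

/-- The stabilizer (hyperoctahedral subgroup) of the base matching, as a finset. -/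
def stabH (n : ℕ) : Finset (Equiv.Perm (Fin (2 * n))) :=
  Finset.univ.filter (fun h => h * baseMatching n * h⁻¹ = baseMatching n)


section GelfandAux

variable {α : Type*} [DecidableEq α] [Fintype α]

lemma lemA : ∀ (k : ℕ) (s : Finset α) (x y : Equiv.Perm α), s.card ≤ k →
    (∀ p, x (x p) = p) → (∀ p, y (y p) = p) →
    (∀ p ∈ s, x p ∈ s) → (∀ p ∈ s, y p ∈ s) →
    (∀ p ∈ s, x p ≠ p) → (∀ p ∈ s, y p ≠ p) →
    ∀ a : α, ∃ σ : Equiv.Perm α, (∀ p, σ (σ p) = p) ∧ (∀ p ∉ s, σ p = p) ∧ σ a = a ∧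
      ∀ p ∈ s, σ (x p) = y (σ p) := by
  intro k
  induction k with
  | zero =>
    intro s x y hcard _ _ _ _ _ _ a
    have hs : s = ∅ := Finset.card_eq_zero.mp (Nat.le_zero.mp hcard)
    subst hs
    exact ⟨1, by simp, by simp, by simp, by simp⟩
  | succ k ih =>
    intro s x y hcard hx2 hy2 hxs hys hxf hyf a
    rcases Finset.eq_empty_or_nonempty s with hs | hs
    · subst hs; exact ⟨1, by simp, by simp, by simp, by simp⟩
    -- designated point
    obtain ⟨a₀, ha₀def⟩ : ∃ a₀, (if a ∈ s then a else hs.choose) = a₀ := ⟨_, rfl⟩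
    have ha₀ : a₀ ∈ s := by
      rw [← ha₀def]; split
      · assumption
      · exact hs.choose_spec
    have ha₀a : a ∈ s → a₀ = a := by
      intro h; rw [← ha₀def, if_pos h]
    obtain ⟨b, hb⟩ : ∃ b, x a₀ = b := ⟨_, rfl⟩
    obtain ⟨c, hc⟩ : ∃ c, y a₀ = c := ⟨_, rfl⟩
    have hbs : b ∈ s := hb ▸ hxs _ ha₀
    have hcs : c ∈ s := hc ▸ hys _ ha₀
    have hba : b ≠ a₀ := hb ▸ hxf _ ha₀
    have hca : c ≠ a₀ := hc ▸ hyf _ ha₀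
    have hxb : x b = a₀ := by rw [← hb, hx2]
    have hyc : y c = a₀ := by rw [← hc, hy2]
    by_cases hbc : b = c
    · -- strip {a₀, b}
      set s' := s \ {a₀, b} with hs'
      have hsub : {a₀, b} ⊆ s := by
        intro p hp; simp at hp; rcases hp with rfl | rfl <;> assumption
      have hcard' : s'.card ≤ k := by
        rw [hs', Finset.card_sdiff_of_subset hsub]
        have h2 : ({a₀, b} : Finset α).card = 2 := by
          rw [Finset.card_insert_of_notMem (by simp [Ne.symm hba]), Finset.card_singleton]
        omega
      have hmem' : ∀ p, p ∈ s' ↔ p ∈ s ∧ p ≠ a₀ ∧ p ≠ b := by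
        intro p; simp [hs', and_assoc]
      have hxs' : ∀ p ∈ s', x p ∈ s' := by
        intro p hp; rw [hmem'] at hp ⊢
        refine ⟨hxs _ hp.1, fun h => ?_, fun h => ?_⟩
        · have h3 : x a₀ = p := by rw [← h, hx2]
          exact hp.2.2 (hb.symm.trans h3).symm
        · have h3 : x b = p := by rw [← h, hx2]
          rw [hxb] at h3
          exact hp.2.1 h3.symm
      have hyb : y b = a₀ := by rw [hbc]; exact hyc
      have hys' : ∀ p ∈ s', y p ∈ s' := by
        intro p hp; rw [hmem'] at hp ⊢
        refine ⟨hys _ hp.1, fun h => ?_, fun h => ?_⟩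
        · have h3 : y a₀ = p := by rw [← h, hy2]
          rw [hc, ← hbc] at h3
          exact hp.2.2 h3.symm
        · have h3 : y b = p := by rw [← h, hy2]
          rw [hyb] at h3
          exact hp.2.1 h3.symm
      have hxf' : ∀ p ∈ s', x p ≠ p := fun p hp => hxf p ((hmem' p).mp hp).1
      have hyf' : ∀ p ∈ s', y p ≠ p := fun p hp => hyf p ((hmem' p).mp hp).1
      obtain ⟨σ, hσ2, hσout, hσa, hσrel⟩ := ih s' x y hcard' hx2 hy2 hxs' hys' hxf' hyf' a
      have hσa₀ : σ a₀ = a₀ := hσout _ (by rw [hmem']; tauto)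
      have hσb : σ b = b := hσout _ (by rw [hmem']; tauto)
      refine ⟨σ, hσ2, fun p hp => hσout p (by rw [hmem']; tauto), hσa, ?_⟩
      intro p hp
      by_cases hpa : p = a₀
      · subst hpa
        rw [hb, hσb, hσa₀, hc, ← hbc]
      · by_cases hpb : p = b
        · subst hpb
          rw [hxb, hσa₀, hσb, hyb]
        · exact hσrel p (by rw [hmem']; tauto)
    · -- b ≠ c : strip {b, c}
      obtain ⟨d, hd⟩ : ∃ d, x c = d := ⟨_, rfl⟩
      obtain ⟨e, he⟩ : ∃ e, y b = e := ⟨_, rfl⟩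
      have hds : d ∈ s := hd ▸ hxs _ hcs
      have hes : e ∈ s := he ▸ hys _ hbs
      have hxd : x d = c := by rw [← hd, hx2]
      have hye : y e = b := by rw [← he, hy2]
      have hda : d ≠ a₀ := by
        intro h; apply hbc
        have h2 := hxd; rw [h] at h2
        exact hb.symm.trans h2
      have hdb : d ≠ b := by
        intro h; apply hca
        have h2 := hxd; rw [h, hxb] at h2
        exact h2.symm
      have hdc : d ≠ c := hd ▸ hxf _ hcs
      have hea : e ≠ a₀ := by
        intro h; apply hbc
        have h2 := hye; rw [h] at h2
        exact (hc.symm.trans h2).symm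
      have hec : e ≠ c := by
        intro h; apply hba
        have h2 := hye; rw [h, hyc] at h2
        exact h2.symm
      have heb : e ≠ b := he ▸ hyf _ hbs
      set τ := Equiv.swap b c with hτ
      set β := Equiv.swap b d with hβ
      set γ := Equiv.swap c e with hγ
      set xh := β * x * β * τ with hxhdef
      set yh := γ * y * γ * τ with hyhdef
      have hxh_app : ∀ p, xh p = β (x (β (τ p))) := fun p => rfl
      have hyh_app : ∀ p, yh p = γ (y (γ (τ p))) := fun p => rfl
      have hτa : τ a₀ = a₀ := Equiv.swap_apply_of_ne_of_ne (Ne.symm hba) (Ne.symm hca)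
      have hτd : τ d = d := Equiv.swap_apply_of_ne_of_ne hdb hdc
      have hτe : τ e = e := Equiv.swap_apply_of_ne_of_ne heb hec
      have hxh_a : xh a₀ = d := by
        rw [hxh_app, hτa, Equiv.swap_apply_of_ne_of_ne (Ne.symm hba) (Ne.symm hda), hb,
          Equiv.swap_apply_left]
      have hxh_d : xh d = a₀ := by
        rw [hxh_app, hτd, Equiv.swap_apply_right, hxb,
          Equiv.swap_apply_of_ne_of_ne (Ne.symm hba) (Ne.symm hda)]
      have hxh_b : xh b = b := by
        rw [hxh_app, Equiv.swap_apply_left,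
          Equiv.swap_apply_of_ne_of_ne (Ne.symm hbc) (Ne.symm hdc), hd,
          Equiv.swap_apply_right]
      have hxh_c : xh c = c := by
        rw [hxh_app, Equiv.swap_apply_right, Equiv.swap_apply_left, hxd,
          Equiv.swap_apply_of_ne_of_ne (Ne.symm hbc) (Ne.symm hdc)]
      have hxh_gen : ∀ p, p ≠ a₀ → p ≠ b → p ≠ c → p ≠ d → xh p = x p := by
        intro p h1 h2 h3 h4
        rw [hxh_app, Equiv.swap_apply_of_ne_of_ne h2 h3, Equiv.swap_apply_of_ne_of_ne h2 h4,
          Equiv.swap_apply_of_ne_of_ne (fun h => h1 (by rw [← hxb, ← h, hx2]))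
            (fun h => h3 (by rw [← hxd, ← h, hx2]))]
      have hyh_a : yh a₀ = e := by
        rw [hyh_app, hτa, Equiv.swap_apply_of_ne_of_ne (Ne.symm hca) (Ne.symm hea), hc,
          Equiv.swap_apply_left]
      have hyh_e : yh e = a₀ := by
        rw [hyh_app, hτe, Equiv.swap_apply_right, hyc,
          Equiv.swap_apply_of_ne_of_ne (Ne.symm hca) (Ne.symm hea)]
      have hyh_b : yh b = b := by
        rw [hyh_app, Equiv.swap_apply_left, Equiv.swap_apply_left, hye,
          Equiv.swap_apply_of_ne_of_ne hbc (Ne.symm heb)]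
      have hyh_c : yh c = c := by
        rw [hyh_app, Equiv.swap_apply_right, Equiv.swap_apply_of_ne_of_ne hbc (Ne.symm heb),
          he, Equiv.swap_apply_right]
      have hyh_gen : ∀ p, p ≠ a₀ → p ≠ b → p ≠ c → p ≠ e → yh p = y p := by
        intro p h1 h2 h3 h4
        rw [hyh_app, Equiv.swap_apply_of_ne_of_ne h2 h3, Equiv.swap_apply_of_ne_of_ne h3 h4,
          Equiv.swap_apply_of_ne_of_ne (fun h => h1 (by rw [← hyc, ← h, hy2]))
            (fun h => h2 (by rw [← hye, ← h, hy2]))]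
      -- involutivity of xh, yh
      have hxh2 : ∀ p, xh (xh p) = p := by
        intro p
        by_cases h1 : p = a₀
        · rw [h1, hxh_a, hxh_d]
        by_cases h2 : p = b
        · rw [h2, hxh_b, hxh_b]
        by_cases h3 : p = c
        · rw [h3, hxh_c, hxh_c]
        by_cases h4 : p = d
        · rw [h4, hxh_d, hxh_a]
        rw [hxh_gen p h1 h2 h3 h4,
          hxh_gen (x p) (fun h => h2 (by rw [← hb, ← h, hx2]))
            (fun h => h1 (by rw [← hxb, ← h, hx2]))
            (fun h => h4 (by rw [← hd, ← h, hx2]))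
            (fun h => h3 (by rw [← hxd, ← h, hx2])), hx2]
      have hyh2 : ∀ p, yh (yh p) = p := by
        intro p
        by_cases h1 : p = a₀
        · rw [h1, hyh_a, hyh_e]
        by_cases h2 : p = b
        · rw [h2, hyh_b, hyh_b]
        by_cases h3 : p = c
        · rw [h3, hyh_c, hyh_c]
        by_cases h4 : p = e
        · rw [h4, hyh_e, hyh_a]
        rw [hyh_gen p h1 h2 h3 h4,
          hyh_gen (y p) (fun h => h3 (by rw [← hc, ← h, hy2]))
            (fun h => h4 (by rw [← he, ← h, hy2]))
            (fun h => h1 (by rw [← hyc, ← h, hy2]))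
            (fun h => h2 (by rw [← hye, ← h, hy2])), hy2]
      -- the smaller set
      set s' := s \ {b, c} with hs'
      have hsub : {b, c} ⊆ s := by
        intro p hp; simp at hp; rcases hp with rfl | rfl <;> assumption
      have hcard' : s'.card ≤ k := by
        rw [hs', Finset.card_sdiff_of_subset hsub]
        have h2 : ({b, c} : Finset α).card = 2 := by
          rw [Finset.card_insert_of_notMem (by simp [hbc]), Finset.card_singleton]
        omega
      have hmem' : ∀ p, p ∈ s' ↔ p ∈ s ∧ p ≠ b ∧ p ≠ c := by
        intro p; simp [hs', and_assoc]
      have ha₀s' : a₀ ∈ s' := by rw [hmem']; exact ⟨ha₀, Ne.symm hba, Ne.symm hca⟩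
      have hds' : d ∈ s' := by rw [hmem']; exact ⟨hds, hdb, hdc⟩
      have hes' : e ∈ s' := by rw [hmem']; exact ⟨hes, heb, hec⟩
      have hxs' : ∀ p ∈ s', xh p ∈ s' := by
        intro p hp; rw [hmem'] at hp
        by_cases h1 : p = a₀
        · rw [h1, hxh_a]; exact hds'
        by_cases h4 : p = d
        · rw [h4, hxh_d]; exact ha₀s'
        rw [hxh_gen p h1 hp.2.1 hp.2.2 h4, hmem']
        refine ⟨hxs _ hp.1, fun h => h1 (by rw [← hxb, ← h, hx2]),
          fun h => h4 (by rw [← hd, ← h, hx2])⟩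
      have hys'' : ∀ p ∈ s', yh p ∈ s' := by
        intro p hp; rw [hmem'] at hp
        by_cases h1 : p = a₀
        · rw [h1, hyh_a]; exact hes'
        by_cases h4 : p = e
        · rw [h4, hyh_e]; exact ha₀s'
        rw [hyh_gen p h1 hp.2.1 hp.2.2 h4, hmem']
        refine ⟨hys _ hp.1, fun h => h4 (by rw [← he, ← h, hy2]),
          fun h => h1 (by rw [← hyc, ← h, hy2])⟩
      have hxf' : ∀ p ∈ s', xh p ≠ p := by
        intro p hp; rw [hmem'] at hp
        by_cases h1 : p = a₀
        · rw [h1, hxh_a]; exact fun h => hda h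
        by_cases h4 : p = d
        · rw [h4, hxh_d]; exact fun h => hda h.symm
        rw [hxh_gen p h1 hp.2.1 hp.2.2 h4]
        exact hxf _ hp.1
      have hyf' : ∀ p ∈ s', yh p ≠ p := by
        intro p hp; rw [hmem'] at hp
        by_cases h1 : p = a₀
        · rw [h1, hyh_a]; exact fun h => hea h
        by_cases h4 : p = e
        · rw [h4, hyh_e]; exact fun h => hea h.symm
        rw [hyh_gen p h1 hp.2.1 hp.2.2 h4]
        exact hyf _ hp.1
      obtain ⟨σ, hσ2, hσout, hσa₀, hσrel⟩ :=
        ih s' xh yh hcard' hxh2 hyh2 hxs' hys'' hxf' hyf' a₀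
      have hσb : σ b = b := hσout _ (by rw [hmem']; tauto)
      have hσc : σ c = c := hσout _ (by rw [hmem']; tauto)
      have hσd : σ d = e := by
        have h2 := hσrel a₀ ha₀s'
        rw [hxh_a, hσa₀, hyh_a] at h2
        exact h2
      have hσe : σ e = d := by
        rw [← hσd, hσ2]
      have hσinj : ∀ p q, σ p = σ q → p = q := fun p q h => σ.injective h
      refine ⟨σ * τ, ?_, ?_, ?_, ?_⟩
      · -- involution
        intro p
        show σ (τ (σ (τ p))) = p
        by_cases hp1 : p = b
        · rw [hp1, Equiv.swap_apply_left, hσc, Equiv.swap_apply_right, hσb]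
        by_cases hp2 : p = c
        · rw [hp2, Equiv.swap_apply_right, hσb, Equiv.swap_apply_left, hσc]
        rw [Equiv.swap_apply_of_ne_of_ne hp1 hp2,
          Equiv.swap_apply_of_ne_of_ne (fun h => hp1 (hσinj _ _ (h.trans hσb.symm)))
            (fun h => hp2 (hσinj _ _ (h.trans hσc.symm))), hσ2]
      · -- fixes outside s
        intro p hp
        show σ (τ p) = p
        have hp1 : p ≠ b := fun h => hp (h ▸ hbs)
        have hp2 : p ≠ c := fun h => hp (h ▸ hcs)
        rw [Equiv.swap_apply_of_ne_of_ne hp1 hp2]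
        exact hσout p (fun h => hp ((hmem' p).mp h).1)
      · -- fixes a
        show σ (τ a) = a
        by_cases has : a ∈ s
        · have ha' := ha₀a has
          rw [Equiv.swap_apply_of_ne_of_ne (fun h => hba (ha' ▸ h.symm))
            (fun h => hca (ha' ▸ h.symm)), ← ha', hσa₀]
        · have hp1 : a ≠ b := fun h => has (h ▸ hbs)
          have hp2 : a ≠ c := fun h => has (h ▸ hcs)
          rw [Equiv.swap_apply_of_ne_of_ne hp1 hp2]
          exact hσout a (fun h => has ((hmem' a).mp h).1)
      · -- the conjugation relation
        intro p hp
        show σ (τ (x p)) = y (σ (τ p))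
        by_cases hp1 : p = a₀
        · rw [hp1, hb, Equiv.swap_apply_left, hσc, hτa, hσa₀, hc]
        by_cases hp2 : p = b
        · rw [hp2, hxb, hτa, hσa₀, Equiv.swap_apply_left, hσc, hyc]
        by_cases hp3 : p = c
        · rw [hp3, hd, hτd, hσd, Equiv.swap_apply_right, hσb, he]
        by_cases hp4 : p = d
        · rw [hp4, hxd, Equiv.swap_apply_right, hσb, hτd, hσd, hye]
        -- generic p
        have hps' : p ∈ s' := by rw [hmem']; exact ⟨hp, hp2, hp3⟩
        have hxpb : x p ≠ b := fun h => hp1 (by rw [← hxb, ← h, hx2])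
        have hxpc : x p ≠ c := fun h => hp4 (by rw [← hd, ← h, hx2])
        rw [Equiv.swap_apply_of_ne_of_ne hxpb hxpc,
          Equiv.swap_apply_of_ne_of_ne hp2 hp3]
        have hrel := hσrel p hps'
        rw [hxh_gen p hp1 hp2 hp3 hp4] at hrel
        rw [hrel]
        apply hyh_gen
        · exact fun h => hp1 (hσinj _ _ (h.trans hσa₀.symm))
        · exact fun h => hp2 (hσinj _ _ (h.trans hσb.symm))
        · exact fun h => hp3 (hσinj _ _ (h.trans hσc.symm))
        · exact fun h => hp4 (hσinj _ _ (h.trans hσd.symm))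

end GelfandAux

section GelfandRep

open CategoryTheory LinearMap

variable {G : Type} [Group G] [Fintype G] [DecidableEq G]

lemma trace_smulRight' (V : Type) [AddCommGroup V] [Module ℂ V] [FiniteDimensional ℂ V]
    (φ : V →ₗ[ℂ] ℂ) (z : V) : trace ℂ V (φ.smulRight z) = φ z := by
  have h1 : φ.smulRight z = (toSpanSingleton ℂ V z) ∘ₗ φ := by
    ext v; simp [toSpanSingleton_apply]
  rw [h1, trace_comp_comm']
  have h2 : φ ∘ₗ toSpanSingleton ℂ V z = (φ z) • LinearMap.id := by
    ext t; simp [toSpanSingleton_apply, map_smul, smul_eq_mul, mul_comm]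
  rw [h2, map_smul, trace_id, Module.finrank_self]
  simp

lemma schurKI (V : FDRep ℂ G) (hV : Simple V) (φ : V →ₗ[ℂ] ℂ) (z : V) (v : V) :
    ∑ g : G, φ (V.ρ g v) • (V.ρ g⁻¹ z) =
      ((Fintype.card G : ℂ) * φ z / (Module.finrank ℂ V : ℂ)) • v := by
  haveI := hV
  have hd : (0 : ℕ) < Module.finrank ℂ V := by
    by_contra h
    have h0 : Module.finrank ℂ V = 0 := by omega
    haveI := Module.finrank_zero_iff (R := ℂ) (M := V) |>.mp h0
    exact CategoryTheory.id_nonzero V (by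
      apply Action.hom_ext
      ext w
      exact @Subsingleton.elim _ this _ _)
  set A : V →ₗ[ℂ] V := ∑ g : G, ((V.ρ g⁻¹) ∘ₗ ((φ.smulRight z) ∘ₗ (V.ρ g))) with hA
  have hAapp : ∀ w, A w = ∑ g : G, φ (V.ρ g w) • (V.ρ g⁻¹ z) := by
    intro w
    rw [hA, LinearMap.sum_apply]
    exact Finset.sum_congr rfl fun g _ => by simp [map_smul]
  have hcomm : ∀ s : G, A ∘ₗ (V.ρ s) = (V.ρ s) ∘ₗ A := by
    intro s
    apply LinearMap.ext
    intro w
    simp only [LinearMap.comp_apply, hAapp, map_sum, map_smul]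
    rw [← Equiv.sum_comp (Equiv.mulRight s) (fun g => φ ((V.ρ g) w) • (V.ρ s) ((V.ρ g⁻¹) z))]
    have hss : ∀ u : V, V.ρ s (V.ρ s⁻¹ u) = u := by
      intro u
      rw [← Module.End.mul_apply, ← map_mul, mul_inv_cancel, map_one, Module.End.one_apply]
    apply Finset.sum_congr rfl
    intro g _
    simp only [Equiv.coe_mulRight, mul_inv_rev, map_mul, Module.End.mul_apply, hss]
  -- package as a morphism in FDRep
  let fA : V ⟶ V := ⟨ConcreteCategory.ofHom A, fun s => by
    ext w
    exact congrFun (congrArg (fun (f : V →ₗ[ℂ] V) => f.toFun) (hcomm s)) w⟩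
  obtain ⟨cc, hcc⟩ := CategoryTheory.endomorphism_simple_eq_smul_id (𝕜 := ℂ) fA
  have hAc : A = cc • LinearMap.id := by
    have h1 : (cc • 𝟙 V).hom = fA.hom := by rw [hcc]
    have h2 : (cc • 𝟙 V).hom = cc • (𝟙 V.V) := by
      simp [Action.smul_hom]
    rw [h2] at h1
    have h3 := congrArg (fun f => f.hom.hom) h1
    exact h3.symm
  -- compute trace of A
  have htr : trace ℂ V A = (Fintype.card G : ℂ) * φ z := by
    rw [hA, map_sum]
    have hterm : ∀ g : G,
        trace ℂ V ((V.ρ g⁻¹) ∘ₗ ((φ.smulRight z) ∘ₗ (V.ρ g))) = φ z := by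
      intro g
      have hgg : (V.ρ g) ∘ₗ (V.ρ g⁻¹) = LinearMap.id := by
        apply LinearMap.ext; intro u
        rw [LinearMap.comp_apply, ← Module.End.mul_apply, ← map_mul, mul_inv_cancel, map_one,
          Module.End.one_apply, LinearMap.id_apply]
      rw [trace_comp_comm', LinearMap.comp_assoc, hgg, LinearMap.comp_id]
      exact trace_smulRight' V φ z
    rw [Finset.sum_congr rfl (fun g _ => hterm g)]
    simp [Finset.card_univ, mul_comm]
  have htr2 : trace ℂ V A = cc * (Module.finrank ℂ V : ℂ) := by
    rw [hAc, map_smul, trace_id]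
    simp [mul_comm]
  have hccval : cc = (Fintype.card G : ℂ) * φ z / (Module.finrank ℂ V : ℂ) := by
    have hdne : (Module.finrank ℂ V : ℂ) ≠ 0 := Nat.cast_ne_zero.mpr hd.ne'
    field_simp
    rw [← htr, htr2, mul_comm]
  have hfin := LinearMap.congr_fun hAc v
  rw [hAapp v] at hfin
  rw [hfin, hccval]
  simp

lemma simple_finrank_pos (V : FDRep ℂ G) (hV : Simple V) : 0 < Module.finrank ℂ V := by
  haveI := hV
  by_contra h
  have h0 : Module.finrank ℂ V = 0 := by omega
  haveI hsub := Module.finrank_zero_iff (R := ℂ) (M := V) |>.mp h0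
  exact CategoryTheory.id_nonzero V (by
    apply Action.hom_ext
    ext w
    exact @Subsingleton.elim _ hsub _ _)

theorem gelfand_abstract (K : Finset G) (h1K : (1:G) ∈ K)
    (hmulK : ∀ a ∈ K, ∀ b ∈ K, a * b ∈ K) (hinvK : ∀ a ∈ K, a⁻¹ ∈ K)
    (hsymm : ∀ g : G, ∃ h ∈ K, g⁻¹ = h * g * h)
    (V : FDRep ℂ G) (hV : Simple V) :
    (1:ℂ)/(K.card : ℂ) * ∑ h ∈ K, V.character h = 0 ∨
    (1:ℂ)/(K.card : ℂ) * ∑ h ∈ K, V.character h = 1 := by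
  haveI := hV
  have hK0 : (K.card : ℂ) ≠ 0 := by
    have : 0 < K.card := Finset.card_pos.mpr ⟨1, h1K⟩
    exact_mod_cast this.ne'
  set N : ℂ := (K.card : ℂ) with hN
  set T : V →ₗ[ℂ] V := N⁻¹ • ∑ h ∈ K, (V.ρ h : V →ₗ[ℂ] V) with hT
  have hTapp : ∀ v, T v = N⁻¹ • ∑ h ∈ K, V.ρ h v := by
    intro v; rw [hT]; simp [LinearMap.sum_apply]
  -- left invariance
  have hleft : ∀ h ∈ K, ∀ v, V.ρ h (T v) = T v := by
    intro h hh v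
    rw [hTapp, map_smul, map_sum]
    congr 1
    refine Finset.sum_nbij' (fun k => h * k) (fun k => h⁻¹ * k) ?_ ?_ ?_ ?_ ?_
    · intro k hk; exact hmulK h hh k hk
    · intro k hk; exact hmulK _ (hinvK h hh) _ hk
    · intro k hk; group
    · intro k hk; group
    · intro k hk; rw [← Module.End.mul_apply, ← map_mul]
  -- right invariance
  have hright : ∀ h ∈ K, ∀ v, T (V.ρ h v) = T v := by
    intro h hh v
    rw [hTapp, hTapp]
    congr 1
    refine Finset.sum_nbij' (fun k => k * h) (fun k => k * h⁻¹) ?_ ?_ ?_ ?_ ?_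
    · intro k hk; exact hmulK k hk h hh
    · intro k hk; exact hmulK _ hk _ (hinvK h hh)
    · intro k hk; group
    · intro k hk; group
    · intro k hk; rw [← Module.End.mul_apply, ← map_mul]
  have hfixT : ∀ w, (∀ h ∈ K, V.ρ h w = w) → T w = w := by
    intro w hw
    rw [hTapp, Finset.sum_congr rfl (fun h hh => hw h hh), Finset.sum_const]
    rw [hN]
    simp only [← Nat.cast_smul_eq_nsmul ℂ, smul_smul]
    rw [inv_mul_cancel₀ hK0, one_smul]
  have hTT : ∀ v, T (T v) = T v := fun v => hfixT _ (fun h hh => hleft h hh v)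
  have hproj : LinearMap.IsProj (LinearMap.range T) T :=
    ⟨fun v => LinearMap.mem_range_self T v, fun v hv => by
      obtain ⟨w, rfl⟩ := hv; exact hTT w⟩
  have htrace : LinearMap.trace ℂ V T = (Module.finrank ℂ (LinearMap.range T) : ℂ) :=
    hproj.trace
  have hgoal : (1:ℂ)/(K.card : ℂ) * ∑ h ∈ K, V.character h = LinearMap.trace ℂ V T := by
    rw [hT, map_smul, map_sum]
    simp only [FDRep.character, smul_eq_mul, one_div, hN]
  -- the multiplicity
  have hNG : (Fintype.card G : ℂ) ≠ 0 := by
    exact_mod_cast (Fintype.card_pos (α := G)).ne'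
  have hd : (0:ℕ) < Module.finrank ℂ V := simple_finrank_pos V hV
  have hdC : (Module.finrank ℂ V : ℂ) ≠ 0 := Nat.cast_ne_zero.mpr hd.ne'
  have hmle : Module.finrank ℂ (LinearMap.range T) ≤ 1 := by
    by_contra hcon
    push_neg at hcon
    set r := LinearMap.range T with hr
    let bb : Module.Basis (Fin (Module.finrank ℂ r)) ℂ r := Module.finBasis ℂ r
    have hi0 : (0:ℕ) < Module.finrank ℂ r := by omega
    have hi1 : (1:ℕ) < Module.finrank ℂ r := hcon
    set i0 : Fin (Module.finrank ℂ r) := ⟨0, hi0⟩ with hii0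
    set i1 : Fin (Module.finrank ℂ r) := ⟨1, hi1⟩ with hii1
    have hi01 : i0 ≠ i1 := by
      intro h; rw [Fin.ext_iff] at h; simp [hii0, hii1] at h
    set u : V := ((bb i0 : r) : V) with hu
    set w : V := ((bb i1 : r) : V) with hw
    have humem : u ∈ r := (bb i0).2
    have hwmem : w ∈ r := (bb i1).2
    have hfixvec : ∀ v ∈ r, ∀ h ∈ K, V.ρ h v = v := by
      intro v hv h hh
      obtain ⟨v0, rfl⟩ := hv
      exact hleft h hh v0
    have hTvr : ∀ v ∈ r, T v = v := fun v hv => hproj.2 v hv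
    set Tr : V →ₗ[ℂ] r := T.codRestrict r (fun v => LinearMap.mem_range_self T v) with hTrdef
    have hTr : ∀ v, ((Tr v : r) : V) = T v := fun v => rfl
    have hTru : Tr u = bb i0 := by
      apply Subtype.ext
      rw [hTr, hTvr u humem, hu]
    have hTrw : Tr w = bb i1 := by
      apply Subtype.ext
      rw [hTr, hTvr w hwmem, hw]
    set φ : V →ₗ[ℂ] ℂ := (bb.coord i0) ∘ₗ Tr with hφdef
    set ψ : V →ₗ[ℂ] ℂ := (bb.coord i1) ∘ₗ Tr with hψdef
    have hφu : φ u = 1 := by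
      rw [hφdef]; simp [hTru, Module.Basis.coord_apply, Module.Basis.repr_self]
    have hψu : ψ u = 0 := by
      rw [hψdef]
      simp only [LinearMap.comp_apply, hTru, Module.Basis.coord_apply, Module.Basis.repr_self]
      rw [Finsupp.single_apply, if_neg hi01]
    have hφw : φ w = 0 := by
      rw [hφdef]
      simp only [LinearMap.comp_apply, hTrw, Module.Basis.coord_apply, Module.Basis.repr_self]
      rw [Finsupp.single_apply, if_neg (Ne.symm hi01)]
    have hψw : ψ w = 1 := by
      rw [hψdef]; simp [hTrw, Module.Basis.coord_apply, Module.Basis.repr_self]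
    have hφinv : ∀ h ∈ K, ∀ v, φ (V.ρ h v) = φ v := by
      intro h hh v
      rw [hφdef]
      simp only [LinearMap.comp_apply]
      congr 1
      exact Subtype.ext (by rw [hTr, hTr]; exact hright h hh v)
    have hψinv : ∀ h ∈ K, ∀ v, ψ (V.ρ h v) = ψ v := by
      intro h hh v
      rw [hψdef]
      simp only [LinearMap.comp_apply]
      congr 1
      exact Subtype.ext (by rw [hTr, hTr]; exact hright h hh v)
    -- convolution evaluation via Schur
    have conv_eval : ∀ (φ' ψ' : V →ₗ[ℂ] ℂ) (u' w' : V) (g : G),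
        ∑ t : G, φ' (V.ρ t u') * ψ' (V.ρ (t⁻¹ * g) w') =
          ((Fintype.card G : ℂ) * φ' (V.ρ g w') / (Module.finrank ℂ V : ℂ)) * ψ' u' := by
      intro φ' ψ' u' w' g
      have h := schurKI V hV φ' (V.ρ g w') u'
      have h2 := congrArg ψ' h
      rw [map_sum, map_smul] at h2
      simp only [map_smul, smul_eq_mul] at h2
      rw [← h2]
      apply Finset.sum_congr rfl
      intro t _
      rw [map_mul, Module.End.mul_apply]
    -- bi-invariance machinery
    have hbiL : ∀ (χ : V →ₗ[ℂ] ℂ), (∀ h ∈ K, ∀ x, χ (V.ρ h x) = χ x) →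
        ∀ h ∈ K, ∀ g : G, ∀ v, χ (V.ρ (h * g) v) = χ (V.ρ g v) := by
      intro χ hχ h hh g v
      rw [map_mul, Module.End.mul_apply, hχ h hh]
    have hbiR : ∀ (χ : V →ₗ[ℂ] ℂ) (v : V), (∀ h ∈ K, V.ρ h v = v) →
        ∀ h ∈ K, ∀ g : G, χ (V.ρ (g * h) v) = χ (V.ρ g v) := by
      intro χ v hv h hh g
      rw [map_mul, Module.End.mul_apply, hv h hh]
    have hinvF : ∀ (χ : V →ₗ[ℂ] ℂ), (∀ h ∈ K, ∀ x, χ (V.ρ h x) = χ x) →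
        ∀ (v : V), (∀ h ∈ K, V.ρ h v = v) →
        ∀ g : G, χ (V.ρ g⁻¹ v) = χ (V.ρ g v) := by
      intro χ hχ v hv g
      obtain ⟨h, hh, hgh⟩ := hsymm g
      rw [hgh, show h * g * h = h * (g * h) from by group, hbiL χ hχ h hh,
        hbiR χ v hv h hh]
    -- commutativity of convolution
    have hconv : ∀ g : G, ∑ t : G, φ (V.ρ t u) * ψ (V.ρ (t⁻¹ * g) u) =
        ∑ t : G, ψ (V.ρ t u) * φ (V.ρ (t⁻¹ * g) u) := by
      intro g
      have hufix : ∀ h ∈ K, V.ρ h u = u := fun h hh => hfixvec u humem h hh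
      -- step 1: pointwise inverse
      have step1 : ∑ t : G, φ (V.ρ t u) * ψ (V.ρ (t⁻¹ * g) u) =
          ∑ t : G, φ (V.ρ t⁻¹ u) * ψ (V.ρ (g⁻¹ * t) u) := by
        apply Finset.sum_congr rfl
        intro t _
        rw [hinvF φ hφinv u hufix t, show g⁻¹ * t = (t⁻¹ * g)⁻¹ from by group,
          hinvF ψ hψinv u hufix (t⁻¹ * g)]
      -- step 2: reindex t ↦ g * t
      have step2 : ∑ t : G, φ (V.ρ t⁻¹ u) * ψ (V.ρ (g⁻¹ * t) u) =
          ∑ t : G, ψ (V.ρ t u) * φ (V.ρ (t⁻¹ * g⁻¹) u) := by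
        rw [← Equiv.sum_comp (Equiv.mulLeft g)
          (fun t => φ (V.ρ t⁻¹ u) * ψ (V.ρ (g⁻¹ * t) u))]
        apply Finset.sum_congr rfl
        intro t _
        simp only [Equiv.coe_mulLeft]
        rw [show (g * t)⁻¹ = t⁻¹ * g⁻¹ from by group,
          show g⁻¹ * (g * t) = t from by group, mul_comm]
      -- step 3: replace g⁻¹ by g using hsymm
      have step3 : ∑ t : G, ψ (V.ρ t u) * φ (V.ρ (t⁻¹ * g⁻¹) u) =
          ∑ t : G, ψ (V.ρ t u) * φ (V.ρ (t⁻¹ * g) u) := by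
        obtain ⟨h, hh, hgh⟩ := hsymm g
        have e1 : ∑ t : G, ψ (V.ρ t u) * φ (V.ρ (t⁻¹ * g⁻¹) u) =
            ∑ t : G, ψ (V.ρ t u) * φ (V.ρ (t⁻¹ * (h * g)) u) := by
          apply Finset.sum_congr rfl
          intro t _
          rw [hgh, show t⁻¹ * (h * g * h) = (t⁻¹ * (h * g)) * h from by group,
            hbiR φ u hufix h hh]
        rw [e1, ← Equiv.sum_comp (Equiv.mulLeft h)
          (fun t => ψ (V.ρ t u) * φ (V.ρ (t⁻¹ * (h * g)) u))]
        apply Finset.sum_congr rfl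
        intro t _
        simp only [Equiv.coe_mulLeft]
        rw [show (h * t)⁻¹ * (h * g) = t⁻¹ * g from by group]
        congr 1
        rw [map_mul, Module.End.mul_apply, hψinv h hh]
      rw [step1, step2, step3]
    -- conclude ψ (ρ g u) = 0 for all g
    have hzero : ∀ g : G, ψ (V.ρ g u) = 0 := by
      intro g
      have h1 := conv_eval φ ψ u u g
      have h2 := conv_eval ψ φ u u g
      rw [hψu, mul_zero] at h1
      rw [hφu, mul_one] at h2
      have := (hconv g).symm.trans h1
      rw [h2] at this
      have h3 := (div_eq_zero_iff.mp this).resolve_right hdC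
      rcases mul_eq_zero.mp h3 with h | h
      · exact absurd h hNG
      · exact h
    -- final contradiction with Schur identity
    have hKI := schurKI V hV ψ w u
    rw [Finset.sum_congr rfl (fun g _ => by rw [hzero g, zero_smul])] at hKI
    rw [Finset.sum_const, smul_zero, hψw, mul_one] at hKI
    have hu0 : u = 0 := by
      have hcoef : ((Fintype.card G : ℂ) / (Module.finrank ℂ V : ℂ)) ≠ 0 :=
        div_ne_zero hNG hdC
      rcases smul_eq_zero.mp hKI.symm with h | h
      · exact absurd h hcoef
      · exact h
    have : (bb i0 : r) = 0 := by
      apply Subtype.ext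
      rw [← hu]; exact hu0
    exact bb.ne_zero i0 this
  -- finish: the value is 0 or 1
  have hmm : Module.finrank ℂ (LinearMap.range T) = 0 ∨
      Module.finrank ℂ (LinearMap.range T) = 1 := by omega
  rw [hgoal, htrace]
  rcases hmm with h | h
  · left; rw [h]; simp
  · right; rw [h]; simp

end GelfandRep

-- new content
lemma mem_stabH (n : ℕ) (h : Equiv.Perm (Fin (2 * n))) :
    h ∈ stabH n ↔ h * baseMatching n * h⁻¹ = baseMatching n := by
  simp [stabH]

lemma one_mem_stabH (n : ℕ) : (1 : Equiv.Perm (Fin (2 * n))) ∈ stabH n := by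
  rw [mem_stabH]; group

lemma mul_mem_stabH (n : ℕ) : ∀ a ∈ stabH n, ∀ b ∈ stabH n, a * b ∈ stabH n := by
  intro a ha b hb
  rw [mem_stabH] at ha hb ⊢
  calc (a * b) * baseMatching n * (a * b)⁻¹
      = a * (b * baseMatching n * b⁻¹) * a⁻¹ := by group
    _ = a * baseMatching n * a⁻¹ := by rw [hb]
    _ = baseMatching n := ha

lemma inv_mem_stabH (n : ℕ) : ∀ a ∈ stabH n, a⁻¹ ∈ stabH n := by
  intro a ha
  rw [mem_stabH] at ha ⊢
  calc a⁻¹ * baseMatching n * a⁻¹⁻¹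
      = a⁻¹ * (a * baseMatching n * a⁻¹) * a⁻¹⁻¹ := by rw [ha]
    _ = baseMatching n := by group


lemma stabH_symm (n : ℕ) (hn : 1 ≤ n) :
    ∀ g : Equiv.Perm (Fin (2 * n)), ∃ h ∈ stabH n, g⁻¹ = h * g * h := by
  intro g
  set x₀ := baseMatching n with hx₀
  set y := g * x₀ * g⁻¹ with hy
  have hx2 : ∀ p, x₀ (x₀ p) = p := by
    intro p
    have := baseMatching_sq n
    calc x₀ (x₀ p) = (x₀ * x₀) p := rfl
      _ = p := by rw [← hx₀] at this; rw [this]; rfl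
  have hy2 : ∀ p, y (y p) = p := by
    intro p
    simp only [hy, Equiv.Perm.mul_apply, Equiv.Perm.coe_inv, Equiv.symm_apply_apply, Equiv.apply_symm_apply]
    rw [hx2, Equiv.apply_symm_apply]
  have hxf : ∀ p, x₀ p ≠ p := baseMatching_fpf n
  have hyf : ∀ p, y p ≠ p := by
    intro p h
    simp only [hy, Equiv.Perm.mul_apply] at h
    have h2 := congrArg (⇑g⁻¹) h
    rw [Equiv.Perm.coe_inv, Equiv.symm_apply_apply] at h2
    exact hxf _ h2
  obtain ⟨σ, hσ2, _, _, hσrel⟩ := lemA (Finset.univ : Finset (Fin (2*n))).card Finset.univ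
    x₀ y le_rfl hx2 hy2 (fun p _ => Finset.mem_univ _) (fun p _ => Finset.mem_univ _)
    (fun p _ => hxf p) (fun p _ => hyf p) (⟨0, by omega⟩ : Fin (2*n))
  have hσσ : σ * σ = 1 := Equiv.ext fun p => hσ2 p
  have hσx : σ * x₀ = y * σ := Equiv.ext fun p => hσrel p (Finset.mem_univ _)
  refine ⟨g⁻¹ * σ, ?_, ?_⟩
  · rw [mem_stabH]
    have hσinv : σ⁻¹ = σ := by
      rw [← mul_one σ⁻¹, ← hσσ, ← mul_assoc, inv_mul_cancel, one_mul]
    calc (g⁻¹ * σ) * baseMatching n * (g⁻¹ * σ)⁻¹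
        = g⁻¹ * (σ * x₀) * (σ⁻¹ * g) := by rw [← hx₀]; group
      _ = g⁻¹ * (y * σ) * (σ⁻¹ * g) := by rw [hσx]
      _ = g⁻¹ * y * (σ * σ⁻¹) * g := by group
      _ = g⁻¹ * y * g := by rw [mul_inv_cancel]; group
      _ = baseMatching n := by rw [hy, ← hx₀]; group
  · symm
    calc (g⁻¹ * σ) * g * (g⁻¹ * σ) = g⁻¹ * (σ * (g * g⁻¹) * σ) := by group
      _ = g⁻¹ * (σ * σ) := by group
      _ = g⁻¹ := by rw [hσσ, mul_one]

/-- `χ : G → ℂ` is an irreducible character if it is the character of some irreducible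
finite-dimensional complex representation of `G`. -/
def irredChars (G : Type) [Group G] : Set (G → ℂ) :=
  {χ | ∃ V : FDRep ℂ G, CategoryTheory.Simple V ∧ χ = V.character}

/-- A kernel is Hermitian positive semidefinite if every finite quadratic form built from it
is a nonnegative real number. -/
def IsHermitianPSD {X : Type*} (k : X → X → ℂ) : Prop :=
  ∀ (m : ℕ) (x : Fin m → X) (c : Fin m → ℂ),
    0 ≤ (∑ i, ∑ j, c i * (starRingEnd ℂ) (c j) * k (x i) (x j)).re ∧
      (∑ i, ∑ j, c i * (starRingEnd ℂ) (c j) * k (x i) (x j)).im = 0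

/-- `(S_{2n}, H)` is a Gelfand pair in the multiplicity sense: for every
irreducible finite-dimensional complex representation of `S_{2n}`, the average of its character
over the stabilizer `H` of the base matching is either `0` or `1`. -/
theorem gelfand_pair_matchings (n : ℕ) (hn : 1 ≤ n)
    (V : FDRep ℂ (Equiv.Perm (Fin (2 * n)))) (hV : CategoryTheory.Simple V) :
    (1 : ℂ) / ((stabH n).card : ℂ) * ∑ h ∈ stabH n, V.character h = 0 ∨
    (1 : ℂ) / ((stabH n).card : ℂ) * ∑ h ∈ stabH n, V.character h = 1 :=
  gelfand_abstract (stabH n) (one_mem_stabH n) (mul_mem_stabH n) (inv_mem_stabH n)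
    (stabH_symm n hn) V hV
end

section
/- Let n ≥ 1, G = S_{2n} = Equiv.Perm (Fin (2n)), W the set of all transpositions in G, x₀ the base matching, and H its stabilizer. For Φ : ℂ → ℂ define k(σ, σ') := Σ_χ Φ(λ_χ) * (χ(1)/|G|) * χ(σ'⁻¹ * σ), summing over all irreducible characters χ of G, with λ_χ := |W| − (1/χ(1)) Σ_{w ∈ W} χ(w). Then for all σ, σ' ∈ G the two-sided H-average of k satisfies (1/|H|²) Σ_{h₁, h₂ ∈ H} k(σ * h₁, σ' * h₂) = Σ_{χ : Σ_{h ∈ H} χ(h) ≠ 0} Φ(λ_χ) * (χ(1)/|G|) * φ_χ(σ'⁻¹ * σ), where φ_χ(g) := (1/|H|) Σ_{h ∈ H} χ(h * g) and the sum runs only over irreducible characters whose restriction to H contains the trivial representation. -/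
open LinearMap

section CharAux

variable {G : Type} [Group G]

lemma sum_rho_eq (V : FDRep ℂ G) (H : Finset G) (hinv : ∀ a ∈ H, a⁻¹ ∈ H) :
    ∑ h ∈ H, V.ρ h⁻¹ = ∑ h ∈ H, V.ρ h := by
  exact Finset.sum_nbij' (fun a => a⁻¹) (fun a => a⁻¹)
    (fun x hx => hinv _ hx) (fun x hx => hinv _ hx)
    (fun x _ => inv_inv x) (fun x _ => inv_inv x) (fun x _ => rfl)

lemma Q_sq (V : FDRep ℂ G) (H : Finset G)
    (hmul : ∀ a ∈ H, ∀ b ∈ H, a * b ∈ H) (hinv : ∀ a ∈ H, a⁻¹ ∈ H) :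
    (∑ h ∈ H, V.ρ h) * (∑ h ∈ H, V.ρ h) = (H.card : ℂ) • ∑ h ∈ H, V.ρ h := by
  rw [Finset.sum_mul_sum]
  have : ∀ a ∈ H, ∑ b ∈ H, V.ρ a * V.ρ b = ∑ h ∈ H, V.ρ h := by
    intro a ha
    rw [show (∑ b ∈ H, V.ρ a * V.ρ b) = ∑ b ∈ H, V.ρ (a * b) by
      refine Finset.sum_congr rfl fun b _ => ?_; rw [map_mul]]
    exact Finset.sum_nbij' (fun b => a * b) (fun c => a⁻¹ * c)
      (fun x hx => hmul _ ha _ hx) (fun x hx => hmul _ (hinv _ ha) _ hx)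
      (fun x _ => by group) (fun x _ => by group) (fun x _ => rfl)
  rw [Finset.sum_congr rfl this, Finset.sum_const, Nat.cast_smul_eq_nsmul]

lemma char_double_avg (V : FDRep ℂ G) (H : Finset G)
    (hmul : ∀ a ∈ H, ∀ b ∈ H, a * b ∈ H) (hinv : ∀ a ∈ H, a⁻¹ ∈ H) (g : G) :
    ∑ h₁ ∈ H, ∑ h₂ ∈ H, V.character (h₂⁻¹ * (g * h₁))
      = (H.card : ℂ) * ∑ h ∈ H, V.character (h * g) := by
  set Q : Module.End ℂ V := ∑ h ∈ H, V.ρ h with hQ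
  have e1 : ∑ h₁ ∈ H, ∑ h₂ ∈ H, V.character (h₂⁻¹ * (g * h₁))
      = LinearMap.trace ℂ V (Q * (V.ρ g * Q)) := by
    rw [Finset.sum_comm]
    have : ∑ h₂ ∈ H, ∑ h₁ ∈ H, V.ρ h₂⁻¹ * (V.ρ g * V.ρ h₁) = Q * (V.ρ g * Q) := by
      calc ∑ h₂ ∈ H, ∑ h₁ ∈ H, V.ρ h₂⁻¹ * (V.ρ g * V.ρ h₁)
          = ∑ h₂ ∈ H, V.ρ h₂⁻¹ * (V.ρ g * Q) := by
            refine Finset.sum_congr rfl fun h₂ _ => ?_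
            simp [hQ, Finset.mul_sum]
        _ = (∑ h₂ ∈ H, V.ρ h₂⁻¹) * (V.ρ g * Q) := (Finset.sum_mul _ _ _).symm
        _ = Q * (V.ρ g * Q) := by rw [sum_rho_eq V H hinv, ← hQ]
    rw [← this, map_sum]
    refine Finset.sum_congr rfl fun h₂ _ => ?_
    rw [map_sum]
    refine Finset.sum_congr rfl fun h₁ _ => ?_
    simp [FDRep.character, map_mul]
  have e2 : LinearMap.trace ℂ V (Q * (V.ρ g * Q))
      = (H.card : ℂ) * LinearMap.trace ℂ V (V.ρ g * Q) := by
    rw [trace_mul_comm, mul_assoc, Q_sq V H hmul hinv, ← hQ, mul_smul_comm, map_smul,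
      smul_eq_mul]
  have e3 : LinearMap.trace ℂ V (V.ρ g * Q) = ∑ h ∈ H, V.character (h * g) := by
    rw [hQ, Finset.mul_sum, map_sum]
    refine Finset.sum_congr rfl fun h _ => ?_
    rw [← FDRep.char_mul_comm]
    simp [FDRep.character, map_mul]
  rw [e1, e2, e3]

lemma char_avg_zero (V : FDRep ℂ G) (H : Finset G) (h1 : (1 : G) ∈ H)
    (hmul : ∀ a ∈ H, ∀ b ∈ H, a * b ∈ H) (hinv : ∀ a ∈ H, a⁻¹ ∈ H)
    (h0 : ∑ h ∈ H, V.character h = 0) (g : G) :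
    ∑ h ∈ H, V.character (h * g) = 0 := by
  set Q : Module.End ℂ V := ∑ h ∈ H, V.ρ h with hQ
  have hc : ((H.card : ℂ)) ≠ 0 := by
    exact_mod_cast Finset.card_ne_zero_of_mem h1
  set P : Module.End ℂ V := (H.card : ℂ)⁻¹ • Q with hP
  have hPP : P * P = P := by
    rw [hP, smul_mul_smul_comm, Q_sq V H hmul hinv, smul_smul, ← hQ]
    congr 1
    field_simp
  have hproj : LinearMap.IsProj (LinearMap.range P) P := by
    refine ⟨fun x => LinearMap.mem_range_self _ _, ?_⟩
    rintro x ⟨y, rfl⟩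
    exact congrFun (congrArg DFunLike.coe hPP) y
  have htrQ : LinearMap.trace ℂ V Q = 0 := by
    rw [hQ, map_sum, ← h0]
    rfl
  have htrP : LinearMap.trace ℂ V P = 0 := by
    rw [hP, map_smul, htrQ, smul_zero]
  have hfr : (Module.finrank ℂ (LinearMap.range P) : ℂ) = 0 := by
    rw [← hproj.trace, htrP]
  have hP0 : P = 0 := by
    rw [← LinearMap.range_eq_bot, ← Submodule.finrank_eq_zero]
    exact_mod_cast hfr
  have hQ0 : Q = 0 := by
    have : (H.card : ℂ) • P = Q := by
      rw [hP, smul_smul, mul_inv_cancel₀ hc, one_smul]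
    rw [← this, hP0, smul_zero]
  have : ∑ h ∈ H, V.character (h * g) = LinearMap.trace ℂ V (V.ρ g * Q) := by
    rw [hQ, Finset.mul_sum, map_sum]
    refine Finset.sum_congr rfl fun h _ => ?_
    rw [← FDRep.char_mul_comm]
    simp [FDRep.character, map_mul]
  rw [this, hQ0, mul_zero, map_zero]

end CharAux

section Finiteness

variable {G : Type} [Group G] [Fintype G]

open scoped Classical in
lemma char_pair (V W : FDRep ℂ G) (hV : CategoryTheory.Simple V)
    (hW : CategoryTheory.Simple W) :
    ∑ g : G, V.character g * W.character g⁻¹ =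
      if Nonempty (V ≅ W) then (Fintype.card G : ℂ) else 0 := by
  letI : Fintype G := ‹Fintype G›
  haveI : Invertible ((Nat.card G : ℂ)) :=
    invertibleOfNonzero (by exact_mod_cast (Nat.card_pos (α := G)).ne')
  haveI : CategoryTheory.Simple (V : FDRep ℂ G) := hV
  haveI : CategoryTheory.Simple (W : FDRep ℂ G) := hW
  have h := FDRep.char_orthonormal (k := ℂ) (G := G) V W
  have h2 : ∑ g : G, V.character g * W.character g⁻¹
      = (Nat.card G : ℂ) • (if Nonempty (V ≅ W) then (1 : ℂ) else 0) := by
    rw [← h, smul_eq_mul, ← mul_assoc, mul_inv_cancel₀ (by exact_mod_cast (Nat.card_pos (α := G)).ne'), one_mul]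
  refine h2.trans ?_
  by_cases hiso : Nonempty (V ≅ W) <;> simp [hiso, Nat.card_eq_fintype_card]

lemma pairing_self (χ : G → ℂ) (hχ : χ ∈ irredChars G) :
    ∑ g : G, χ g * χ g⁻¹ = (Fintype.card G : ℂ) := by
  classical
  obtain ⟨V, hV, rfl⟩ := hχ
  rw [char_pair V V hV hV, if_pos ⟨CategoryTheory.Iso.refl V⟩]

lemma pairing_ne (χ ψ : G → ℂ) (hχ : χ ∈ irredChars G) (hψ : ψ ∈ irredChars G)
    (hne : χ ≠ ψ) : ∑ g : G, χ g * ψ g⁻¹ = 0 := by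
  classical
  obtain ⟨V, hV, rfl⟩ := hχ
  obtain ⟨W, hW, rfl⟩ := hψ
  rw [char_pair V W hV hW, if_neg]
  rintro ⟨i⟩
  exact hne (FDRep.char_iso i)

lemma irredChars_finite : (irredChars G).Finite := by
  classical
  haveI : IsNoetherian ℂ (G → ℂ) := IsNoetherian.iff_fg.mpr inferInstance
  refine LinearIndependent.set_finite_of_isNoetherian (R := ℂ) ?_
  rw [linearIndependent_iff']
  intro t c hsum j hj
  have hcard : (Fintype.card G : ℂ) ≠ 0 := by
    exact_mod_cast (Fintype.card_ne_zero (α := G))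
  have h1 := congrArg (fun f : G → ℂ => ∑ g : G, f g * (j : G → ℂ) g⁻¹) hsum
  simp only [Pi.zero_apply, zero_mul, Finset.sum_const_zero,
    Finset.sum_apply, Pi.smul_apply, smul_eq_mul, Finset.sum_mul] at h1
  rw [Finset.sum_comm] at h1
  simp only [mul_assoc, ← Finset.mul_sum] at h1
  rw [Finset.sum_eq_single j (fun i _ hij => by
      rw [pairing_ne _ _ i.2 j.2 (fun h => hij (Subtype.coe_injective h)), mul_zero])
    (fun h => absurd hj h)] at h1
  rw [pairing_self _ j.2] at h1
  exact (mul_eq_zero.mp h1).resolve_right hcard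

end Finiteness

lemma sum_sum_sum_comm {α β : Type*} (s₁ s₂ : Finset α) (t : Finset β)
    (f : α → α → β → ℂ) :
    ∑ h₁ ∈ s₁, ∑ h₂ ∈ s₂, ∑ χ ∈ t, f h₁ h₂ χ
      = ∑ χ ∈ t, ∑ h₁ ∈ s₁, ∑ h₂ ∈ s₂, f h₁ h₂ χ := by
  calc ∑ h₁ ∈ s₁, ∑ h₂ ∈ s₂, ∑ χ ∈ t, f h₁ h₂ χ
      = ∑ h₁ ∈ s₁, ∑ χ ∈ t, ∑ h₂ ∈ s₂, f h₁ h₂ χ :=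
        Finset.sum_congr rfl fun _ _ => Finset.sum_comm
    _ = ∑ χ ∈ t, ∑ h₁ ∈ s₁, ∑ h₂ ∈ s₂, f h₁ h₂ χ := Finset.sum_comm


/-- Projecting the character-expansion kernel on `S_{2n}` (with `W` the set of
transpositions) by two-sided averaging over the stabilizer `H` of the base matching yields the
expansion over `H`-averaged characters `φ_χ`, where only the irreducible characters whose
restriction to `H` contains the trivial representation survive. -/
theorem projected_kernel_expansion (n : ℕ) (hn : 1 ≤ n)
    (W : Finset (Equiv.Perm (Fin (2 * n))))
    (hW : ∀ g : Equiv.Perm (Fin (2 * n)), g ∈ W ↔ g.IsSwap)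
    (Φ : ℂ → ℂ) (σ σ' : Equiv.Perm (Fin (2 * n))) :
    (1 : ℂ) / ((stabH n).card : ℂ) ^ 2 *
        ∑ h₁ ∈ stabH n, ∑ h₂ ∈ stabH n,
          ∑ᶠ χ ∈ irredChars (Equiv.Perm (Fin (2 * n))),
            Φ ((W.card : ℂ) - 1 / χ 1 * ∑ w ∈ W, χ w) *
              (χ 1 / (Fintype.card (Equiv.Perm (Fin (2 * n))) : ℂ)) *
              χ ((σ' * h₂)⁻¹ * (σ * h₁))
      = ∑ᶠ χ ∈ {χ ∈ irredChars (Equiv.Perm (Fin (2 * n))) | ∑ h ∈ stabH n, χ h ≠ 0},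
          Φ ((W.card : ℂ) - 1 / χ 1 * ∑ w ∈ W, χ w) *
            (χ 1 / (Fintype.card (Equiv.Perm (Fin (2 * n))) : ℂ)) *
            ((1 : ℂ) / ((stabH n).card : ℂ) * ∑ h ∈ stabH n, χ (h * (σ'⁻¹ * σ))) := by
  classical
  -- subgroup properties of stabH
  have h1H : (1 : Equiv.Perm (Fin (2 * n))) ∈ stabH n := by simp [stabH]
  have hmulH : ∀ a ∈ stabH n, ∀ b ∈ stabH n, a * b ∈ stabH n := by
    intro a ha b hb
    simp only [stabH, Finset.mem_filter, Finset.mem_univ, true_and] at ha hb ⊢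
    calc a * b * baseMatching n * (a * b)⁻¹
        = a * (b * baseMatching n * b⁻¹) * a⁻¹ := by group
      _ = baseMatching n := by rw [hb, ha]
  have hinvH : ∀ a ∈ stabH n, a⁻¹ ∈ stabH n := by
    intro a ha
    simp only [stabH, Finset.mem_filter, Finset.mem_univ, true_and] at ha ⊢
    conv_lhs => rw [← ha]
    group
  have hcardH : (((stabH n).card : ℂ)) ≠ 0 := by
    exact_mod_cast Finset.card_ne_zero_of_mem h1H
  have hSfin : (irredChars (Equiv.Perm (Fin (2 * n)))).Finite := irredChars_finite
  have hS'fin :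
      ({χ ∈ irredChars (Equiv.Perm (Fin (2 * n))) | ∑ h ∈ stabH n, χ h ≠ 0}).Finite :=
    hSfin.subset (Set.sep_subset _ _)
  rw [finsum_mem_eq_finite_toFinset_sum _ hS'fin]
  have hT' : hS'fin.toFinset
      = hSfin.toFinset.filter (fun χ => ∑ h ∈ stabH n, χ h ≠ 0) := by
    ext χ
    simp [Set.Finite.mem_toFinset, Set.mem_setOf_eq]
  rw [hT']
  have harg : ∀ h₁ h₂ : Equiv.Perm (Fin (2 * n)),
      (σ' * h₂)⁻¹ * (σ * h₁) = h₂⁻¹ * (σ'⁻¹ * σ * h₁) := by intros; group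
  simp only [harg]
  simp only [finsum_mem_eq_finite_toFinset_sum (hs := hSfin)]
  rw [sum_sum_sum_comm]
  rw [Finset.mul_sum]
  rw [Finset.sum_filter_of_ne (by
    intro χ hχ hne
    obtain ⟨V, hV, rfl⟩ := (Set.Finite.mem_toFinset hSfin).mp hχ
    intro h0
    apply hne
    rw [char_avg_zero V (stabH n) h1H hmulH hinvH h0 (σ'⁻¹ * σ), mul_zero, mul_zero])]
  refine Finset.sum_congr rfl fun χ hχ => ?_
  obtain ⟨V, hV, rfl⟩ := (Set.Finite.mem_toFinset hSfin).mp hχ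
  have hkey : ∑ h₁ ∈ stabH n, ∑ h₂ ∈ stabH n,
      Φ ((W.card : ℂ) - 1 / V.character 1 * ∑ w ∈ W, V.character w) *
        (V.character 1 / (Fintype.card (Equiv.Perm (Fin (2 * n))) : ℂ)) *
        V.character (h₂⁻¹ * (σ'⁻¹ * σ * h₁))
      = Φ ((W.card : ℂ) - 1 / V.character 1 * ∑ w ∈ W, V.character w) *
        (V.character 1 / (Fintype.card (Equiv.Perm (Fin (2 * n))) : ℂ)) *
        (((stabH n).card : ℂ) * ∑ h ∈ stabH n, V.character (h * (σ'⁻¹ * σ))) := by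
    rw [← char_double_avg V (stabH n) hmulH hinvH (σ'⁻¹ * σ)]
    simp only [Finset.mul_sum]
  rw [hkey]
  field_simp
end

section
/- Let n ≥ 1 and let x₀, x, y be fixed-point-free involutions of Fin (2n). Then there exists a permutation π ∈ Equiv.Perm (Fin (2n)) with π * x₀ * π⁻¹ = x₀ and π * x * π⁻¹ = y if and only if the cycle types of the products x₀ * x and x₀ * y coincide: (x₀ * x).cycleType = (x₀ * y).cycleType. (Equivalently: the value of any function that is invariant under the stabilizer of x₀ depends only on the generalized distance to x₀, given by this cycle type.) -/
/-
Orbits of the stabilizer of a base matching: two matchings lie in the same orbit of the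
stabilizer of `x₀` iff the products have equal cycle types.  Proved by induction on the
cardinality of the support, removing one dihedral orbit at a time.
-/

open Equiv Equiv.Perm Function Finset

namespace StabOrbitAux

set_option linter.unusedSectionVars false
set_option maxHeartbeats 1000000

variable {α : Type*} [Fintype α] [DecidableEq α]

lemma inv_eq_self {g : Perm α} (h : g * g = 1) : g⁻¹ = g := by
  rw [← mul_eq_one_iff_inv_eq] at *; exact h

lemma conj_z {x₀ x : Perm α} (h0 : x₀ * x₀ = 1) (h1 : x * x = 1) :
    x₀ * (x₀ * x) * x₀ = (x₀ * x)⁻¹ := by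
  rw [mul_inv_rev, inv_eq_self h0, inv_eq_self h1, ← mul_assoc, h0, one_mul]

lemma conj_z_pow {x₀ x : Perm α} (h0 : x₀ * x₀ = 1) (h1 : x * x = 1) (i : ℕ) :
    x₀ * (x₀ * x) ^ i * x₀ = ((x₀ * x) ^ i)⁻¹ := by
  have : x₀ * (x₀ * x) ^ i * x₀ = (x₀ * (x₀ * x) * x₀⁻¹) ^ i := by
    rw [conj_pow, inv_eq_self h0]
  rw [this, inv_eq_self h0, conj_z h0 h1, inv_pow]

lemma zpow_conj {x₀ x : Perm α} (h0 : x₀ * x₀ = 1) (h1 : x * x = 1) (i : ℕ) :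
    (x₀ * x) ^ i * x₀ * (x₀ * x) ^ i = x₀ := by
  have h := conj_z_pow h0 h1 i
  have h' : x₀ * (x₀ * x) ^ i = ((x₀ * x) ^ i)⁻¹ * x₀ := by
    rw [← h]; rw [mul_assoc, mul_assoc, h0, mul_one]
  rw [mul_assoc, h', ← mul_assoc, mul_inv_cancel, one_mul]

lemma mp_pos (z : Perm α) (a : α) : 0 < Function.minimalPeriod ⇑z a := by
  apply Function.IsPeriodicPt.minimalPeriod_pos (orderOf_pos z)
  show (⇑z)^[orderOf z] a = a
  rw [Equiv.Perm.iterate_eq_pow, pow_orderOf_eq_one]; rfl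

lemma mod_red (z : Perm α) (a : α) (k : ℕ) :
    (z ^ (k % Function.minimalPeriod ⇑z a)) a = (z ^ k) a := by
  have := Function.iterate_mod_minimalPeriod_eq (f := ⇑z) (x := a) (n := k)
  rwa [Equiv.Perm.iterate_eq_pow, Equiv.Perm.iterate_eq_pow] at this

lemma pow_inj_on (z : Perm α) (a : α) {i j : ℕ}
    (hi : i < Function.minimalPeriod ⇑z a) (hj : j < Function.minimalPeriod ⇑z a)
    (h : (z ^ i) a = (z ^ j) a) : i = j := by
  apply Function.iterate_injOn_Iio_minimalPeriod (f := ⇑z) (x := a) hi hj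
  exact h

/-- The key combinatorial lemma: `x₀ a` is never a `z`-power of `a`. -/
lemma key_lemma {x₀ x : Perm α} (h0 : x₀ * x₀ = 1) (h1 : x * x = 1)
    (hs : x.support = x₀.support) {a : α} (ha : a ∈ x₀.support) (k : ℕ) :
    x₀ a ≠ ((x₀ * x) ^ k) a := by
  intro hcon
  set z := x₀ * x with hz
  set μ := Function.minimalPeriod ⇑z a with hμ
  have hμpos : 0 < μ := mp_pos z a
  haveI : NeZero μ := ⟨hμpos.ne'⟩
  have hval : ∀ w : ZMod μ, ((w.val : ℕ) : ZMod μ) = w := fun w => ZMod.natCast_rightInverse w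
  set P : ZMod μ → α := fun i => (z ^ i.val) a with hP
  have hPc : ∀ m : ℕ, P (m : ZMod μ) = (z ^ m) a := by
    intro m
    simp only [hP, ZMod.val_natCast]
    exact mod_red z a m
  have hPinj : Function.Injective P := by
    intro i j h
    have := pow_inj_on z a (ZMod.val_lt i) (ZMod.val_lt j) h
    rw [← hval i, ← hval j, this]
  have hPpow : ∀ (m : ℕ) (i : ZMod μ), (z ^ m) (P i) = P (i + m) := by
    intro m i
    have h2 : i + (m : ZMod μ) = ((i.val + m : ℕ) : ZMod μ) := by push_cast; rw [hval]
    rw [h2, hPc]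
    show (z ^ m) ((z ^ i.val) a) = (z ^ (i.val + m)) a
    rw [add_comm i.val m, pow_add]; rfl
  have hx₀P : ∀ i : ZMod μ, x₀ (P i) = P ((k : ZMod μ) - i) := by
    intro i
    apply (z ^ i.val).injective
    have h2 : (z ^ i.val) (x₀ (P i)) = x₀ a := by
      have h3 := zpow_conj h0 h1 i.val
      calc (z ^ i.val) (x₀ ((z ^ i.val) a)) = (z ^ i.val * x₀ * z ^ i.val) a := rfl
        _ = x₀ a := by rw [h3]
    rw [h2, hPpow]
    have h4 : (k : ZMod μ) - i + i.val = (k : ZMod μ) := by rw [hval]; ring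
    rw [h4, hPc, hcon]
  have hxP : ∀ i : ZMod μ, x (P i) = P ((k : ZMod μ) - i - 1) := by
    intro i
    have hx : x = x₀ * z := by rw [hz, ← mul_assoc, h0, one_mul]
    have h1' : z (P i) = P (i + 1) := by
      have := hPpow 1 i
      simpa using this
    calc x (P i) = x₀ (z (P i)) := by rw [hx]; rfl
      _ = x₀ (P (i + 1)) := by rw [h1']
      _ = P ((k : ZMod μ) - (i + 1)) := hx₀P (i + 1)
      _ = P ((k : ZMod μ) - i - 1) := by ring_nf
  by_cases hsol : ∃ i : ZMod μ, i + i = (k : ZMod μ)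
  · obtain ⟨i, hi⟩ := hsol
    have h2 : (k : ZMod μ) - i = i := by rw [← hi]; ring
    have hfx₀ : x₀ (P i) = P i := by rw [hx₀P i, h2]
    have hfx : x (P i) = P i := by
      have hns : P i ∉ x₀.support := by simp [Equiv.Perm.mem_support, hfx₀]
      rw [← hs] at hns
      simpa [Equiv.Perm.mem_support] using hns
    rw [hxP i, h2] at hfx
    have h5 : i - 1 = i := hPinj hfx
    have h01 : (1 : ZMod μ) = 0 := by linear_combination -h5
    have hμ1 : μ = 1 := by
      have h6 : ((1 : ℕ) : ZMod μ) = 0 := by exact_mod_cast h01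
      rw [ZMod.natCast_eq_zero_iff] at h6
      exact Nat.dvd_one.mp h6
    have hza : z a = a :=
      Function.minimalPeriod_eq_one_iff_isFixedPt.mp (by rw [← hμ]; exact hμ1)
    have hzka : (z ^ k) a = a := by
      have : Function.IsPeriodicPt ⇑z k a := (Function.IsFixedPt.isPeriodicPt hza k)
      rwa [Function.IsPeriodicPt, Function.IsFixedPt, Equiv.Perm.iterate_eq_pow] at this
    rw [hzka] at hcon
    rw [Equiv.Perm.mem_support] at ha
    exact ha hcon
  · push_neg at hsol
    have h2dvd : 2 ∣ μ := by
      by_contra h2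
      have hcop : Nat.Coprime 2 μ := (Nat.prime_two.coprime_iff_not_dvd).mpr h2
      have hu : IsUnit (2 : ZMod μ) := (ZMod.isUnit_iff_coprime 2 μ).mpr (by exact_mod_cast hcop)
      obtain ⟨u, hu⟩ := hu
      apply hsol (↑u⁻¹ * (k : ZMod μ))
      have h7 : (u : ZMod μ) * ((↑u⁻¹ : ZMod μ) * (k : ZMod μ)) = (k : ZMod μ) := by
        rw [← mul_assoc]
        norm_cast
        rw [mul_inv_cancel]
        simp
      calc (↑u⁻¹ * (k : ZMod μ)) + (↑u⁻¹ * (k : ZMod μ)) = 2 * (↑u⁻¹ * (k : ZMod μ)) := by ring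
        _ = (u : ZMod μ) * (↑u⁻¹ * (k : ZMod μ)) := by rw [hu]
        _ = (k : ZMod μ) := h7
    set φ := ZMod.castHom h2dvd (ZMod 2) with hφ
    have hhalf : ∀ w : ZMod μ, φ w = 0 → ∃ i : ZMod μ, i + i = w := by
      intro w hw
      have hwv : ((w.val : ℕ) : ZMod 2) = 0 := by
        have h8 : φ w = ((w.val : ℕ) : ZMod 2) := by
          conv_lhs => rw [← hval w]
          exact map_natCast φ w.val
        rw [← h8, hw]
      have h9 : (2 : ℕ) ∣ w.val := by
        rwa [ZMod.natCast_eq_zero_iff] at hwv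
      obtain ⟨t, ht⟩ := h9
      refine ⟨(t : ZMod μ), ?_⟩
      rw [← hval w, ht]; push_cast; ring
    have hmoved : ∀ i : ZMod μ, x₀ (P i) ≠ P i := by
      intro i he
      rw [hx₀P i] at he
      have := hPinj he
      exact hsol i (by linear_combination -this)
    have hmovedx : ∀ i : ZMod μ, x (P i) ≠ P i := by
      intro i he
      have hns : P i ∉ x.support := by simp [Equiv.Perm.mem_support, he]
      rw [hs] at hns
      rw [Equiv.Perm.mem_support] at hns
      exact hns.elim (by simpa using hmoved i)
    have hk1 : φ (k : ZMod μ) ≠ 0 := by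
      intro h
      obtain ⟨i, hi⟩ := hhalf _ h
      exact hsol i hi
    have hk2 : φ ((k : ZMod μ) - 1) ≠ 0 := by
      intro h
      obtain ⟨i, hi⟩ := hhalf _ h
      apply hmovedx i
      rw [hxP i]
      congr 1
      linear_combination -hi
    have h2cases : ∀ w : ZMod 2, w = 0 ∨ w = 1 := by decide
    rcases h2cases (φ (k : ZMod μ)) with h | h
    · exact hk1 h
    · apply hk2
      rw [map_sub, map_one, h, sub_self]

section Orbit

variable {x₀ x : Perm α} (h0 : x₀ * x₀ = 1) (h1 : x * x = 1)
    (hs : x.support = x₀.support) {a : α} (ha : a ∈ x₀.support)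


include h0 h1 hs ha

lemma key' (i j : ℕ) : x₀ (((x₀ * x) ^ i) a) ≠ ((x₀ * x) ^ j) a := by
  intro h
  apply key_lemma h0 h1 hs ha (i + j)
  have h2 := congrArg ⇑((x₀ * x) ^ i) h
  have h3 : ((x₀ * x) ^ i) (x₀ (((x₀ * x) ^ i) a)) = ((x₀ * x) ^ i * x₀ * (x₀ * x) ^ i) a := rfl
  rw [h3, zpow_conj h0 h1 i] at h2
  rw [h2, ← Equiv.Perm.mul_apply, ← pow_add]

lemma x_eq : x = x₀ * (x₀ * x) := by rw [← mul_assoc, h0, one_mul]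

lemma z_pow_x₀_apply (i : ℕ) (q : α) :
    ((x₀ * x) ^ i) (x₀ q) = x₀ ((((x₀ * x) ^ i)⁻¹) q) := by
  have h2 : x₀ * ((x₀ * x) ^ i) * x₀ = ((x₀ * x) ^ i)⁻¹ := conj_z_pow h0 h1 i
  have h3 : ((x₀ * x) ^ i) * x₀ = x₀ * ((x₀ * x) ^ i)⁻¹ := by
    have h4 := congrArg (fun w => x₀ * w) h2
    simpa only [← mul_assoc, h0, one_mul] using h4
  calc ((x₀ * x) ^ i) (x₀ q) = (((x₀ * x) ^ i) * x₀) q := rfl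
    _ = (x₀ * ((x₀ * x) ^ i)⁻¹) q := by rw [h3]
    _ = x₀ ((((x₀ * x) ^ i)⁻¹) q) := rfl

lemma pow_mu_mul (i : ℕ) : ((x₀ * x) ^ ((Function.minimalPeriod ⇑(x₀ * x) a) * i)) a = a := by
  have h2 : Function.IsPeriodicPt ⇑((x₀ * x)) ((Function.minimalPeriod ⇑(x₀ * x) a) * i) a :=
    (Function.isPeriodicPt_minimalPeriod ⇑((x₀ * x)) a).mul_const i
  show ((x₀ * x) ^ ((Function.minimalPeriod ⇑(x₀ * x) a) * i)) a = a
  rw [← Equiv.Perm.iterate_eq_pow]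
  exact h2

lemma pow_compl (i : ℕ) : (((x₀ * x) ^ i)⁻¹) a = ((x₀ * x) ^ (i * ((Function.minimalPeriod ⇑(x₀ * x) a) - 1))) a := by
  apply (((x₀ * x)) ^ i).injective
  rw [Equiv.Perm.coe_inv, Equiv.apply_symm_apply, ← Equiv.Perm.mul_apply, ← pow_add]
  have hμ : (Function.minimalPeriod ⇑(x₀ * x) a) - 1 + 1 = (Function.minimalPeriod ⇑(x₀ * x) a) := Nat.succ_pred_eq_of_pos (mp_pos ((x₀ * x)) a)
  have h2 : i + i * ((Function.minimalPeriod ⇑(x₀ * x) a) - 1) = (Function.minimalPeriod ⇑(x₀ * x) a) * i := by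
    calc i + i * ((Function.minimalPeriod ⇑(x₀ * x) a) - 1) = i * (((Function.minimalPeriod ⇑(x₀ * x) a) - 1) + 1) := by ring
      _ = i * (Function.minimalPeriod ⇑(x₀ * x) a) := by rw [hμ]
      _ = (Function.minimalPeriod ⇑(x₀ * x) a) * i := by ring
  rw [h2, pow_mu_mul h0 h1 hs ha]

end Orbit

def SA (z : Perm α) (a : α) (m : ℕ) : Finset α := (range m).image fun i => (z ^ i) a
def SB (x₀ z : Perm α) (a : α) (m : ℕ) : Finset α := (range m).image fun i => x₀ ((z ^ i) a)
def SS (x₀ z : Perm α) (a : α) (m : ℕ) : Finset α := SA z a m ∪ SB x₀ z a m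

lemma apply_apply_self {g : Perm α} (h : g * g = 1) (q : α) : g (g q) = q := by
  calc g (g q) = (g * g) q := rfl
    _ = q := by rw [h]; rfl

lemma mem_SA_iff {z : Perm α} {a p : α} {m : ℕ} :
    p ∈ SA z a m ↔ ∃ i, i < m ∧ (z ^ i) a = p := by
  simp [SA, eq_comm]

lemma mem_SB_iff {x₀ z : Perm α} {a p : α} {m : ℕ} :
    p ∈ SB x₀ z a m ↔ ∃ i, i < m ∧ x₀ ((z ^ i) a) = p := by
  simp [SB, eq_comm]

lemma mem_SS_iff {x₀ z : Perm α} {a p : α} {m : ℕ} :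
    p ∈ SS x₀ z a m ↔ (∃ i, i < m ∧ (z ^ i) a = p) ∨ (∃ i, i < m ∧ x₀ ((z ^ i) a) = p) := by
  simp [SS, mem_union, mem_SA_iff, mem_SB_iff]

lemma pow_mem_SA {z : Perm α} {a : α} (k : ℕ) :
    (z ^ k) a ∈ SA z a (Function.minimalPeriod ⇑z a) := by
  rw [mem_SA_iff]
  exact ⟨k % Function.minimalPeriod ⇑z a, Nat.mod_lt _ (mp_pos z a), mod_red z a k⟩

lemma x₀_pow_mem_SB {x₀ z : Perm α} {a : α} (k : ℕ) :
    x₀ ((z ^ k) a) ∈ SB x₀ z a (Function.minimalPeriod ⇑z a) := by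
  rw [mem_SB_iff]
  exact ⟨k % Function.minimalPeriod ⇑z a, Nat.mod_lt _ (mp_pos z a), by rw [mod_red z a k]⟩

lemma card_SA {z : Perm α} {a : α} :
    (SA z a (Function.minimalPeriod ⇑z a)).card = Function.minimalPeriod ⇑z a := by
  rw [SA, Finset.card_image_of_injOn, Finset.card_range]
  intro i hi j hj h
  exact pow_inj_on z a (mem_range.mp hi) (mem_range.mp hj) h

lemma card_SB {x₀ z : Perm α} {a : α} :
    (SB x₀ z a (Function.minimalPeriod ⇑z a)).card = Function.minimalPeriod ⇑z a := by
  rw [SB, Finset.card_image_of_injOn, Finset.card_range]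
  intro i hi j hj h
  exact pow_inj_on z a (mem_range.mp hi) (mem_range.mp hj) (x₀.injective h)

section Orbit

variable {x₀ x : Perm α} (h0 : x₀ * x₀ = 1) (h1 : x * x = 1)
    (hs : x.support = x₀.support) {a : α} (ha : a ∈ x₀.support)

include h0 h1 hs ha

lemma disj_AB : Disjoint (SA (x₀ * x) a (Function.minimalPeriod ⇑(x₀ * x) a))
    (SB x₀ (x₀ * x) a (Function.minimalPeriod ⇑(x₀ * x) a)) := by
  rw [Finset.disjoint_left]
  intro p hpA hpB
  rw [mem_SA_iff] at hpA
  rw [mem_SB_iff] at hpB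
  obtain ⟨i, _, hi⟩ := hpA
  obtain ⟨j, _, hj⟩ := hpB
  exact key' h0 h1 hs ha j i (by rw [hj, hi])

lemma card_SS : (SS x₀ (x₀ * x) a (Function.minimalPeriod ⇑(x₀ * x) a)).card
    = 2 * Function.minimalPeriod ⇑(x₀ * x) a := by
  rw [SS, Finset.card_union_of_disjoint (disj_AB h0 h1 hs ha), card_SA, card_SB]
  ring

lemma SS_subset : SS x₀ (x₀ * x) a (Function.minimalPeriod ⇑(x₀ * x) a) ⊆ x₀.support := by
  intro p hp
  rw [mem_SS_iff] at hp
  rw [Equiv.Perm.mem_support]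
  rcases hp with ⟨i, _, rfl⟩ | ⟨i, _, rfl⟩
  · exact key' h0 h1 hs ha i i
  · intro h
    have h2 : x₀ (x₀ (((x₀ * x) ^ i) a)) = ((x₀ * x) ^ i) a := apply_apply_self h0 _
    rw [h] at h2
    exact key' h0 h1 hs ha i i h2

lemma act_xA (i : ℕ) :
    x (((x₀ * x) ^ i) a) = x₀ (((x₀ * x) ^ (i + 1)) a) := by
  rw [pow_succ']
  show x (((x₀ * x) ^ i) a) = x₀ ((x₀ * x) (((x₀ * x) ^ i) a))
  generalize (((x₀ * x) ^ i) a) = q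
  calc x q = ((x₀ * x₀) * x) q := by rw [h0, one_mul]
    _ = x₀ ((x₀ * x) q) := by rw [mul_assoc]; rfl

lemma inv_comm_pow (i : ℕ) :
    ((x₀ * x)⁻¹) (((x₀ * x) ^ i) a) = ((x₀ * x) ^ (i + (Function.minimalPeriod ⇑(x₀ * x) a - 1))) a := by
  have hc : (x₀ * x)⁻¹ * (x₀ * x) ^ i = (x₀ * x) ^ i * (x₀ * x)⁻¹ :=
    (((Commute.refl (x₀ * x)).pow_right i).inv_left).eq
  have h2 : ((x₀ * x)⁻¹) (((x₀ * x) ^ i) a) = ((x₀ * x) ^ i) (((x₀ * x)⁻¹) a) := by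
    calc ((x₀ * x)⁻¹) (((x₀ * x) ^ i) a) = ((x₀ * x)⁻¹ * (x₀ * x) ^ i) a := rfl
      _ = ((x₀ * x) ^ i * (x₀ * x)⁻¹) a := by rw [hc]
      _ = ((x₀ * x) ^ i) (((x₀ * x)⁻¹) a) := rfl
  rw [h2]
  have h4 : ((x₀ * x)⁻¹) a = ((x₀ * x) ^ (Function.minimalPeriod ⇑(x₀ * x) a - 1)) a := by
    have := pow_compl h0 h1 hs ha 1
    simpa using this
  rw [h4, ← Equiv.Perm.mul_apply, ← pow_add]

lemma act_xB (i : ℕ) :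
    x (x₀ (((x₀ * x) ^ i) a)) =
      ((x₀ * x) ^ (i + (Function.minimalPeriod ⇑(x₀ * x) a - 1))) a := by
  have hxx₀ : x * x₀ = (x₀ * x)⁻¹ := by
    rw [mul_inv_rev, inv_eq_self h0, inv_eq_self h1]
  have h2 : x (x₀ (((x₀ * x) ^ i) a)) = ((x₀ * x)⁻¹) (((x₀ * x) ^ i) a) := by
    calc x (x₀ (((x₀ * x) ^ i) a)) = (x * x₀) (((x₀ * x) ^ i) a) := rfl
      _ = ((x₀ * x)⁻¹) (((x₀ * x) ^ i) a) := by rw [hxx₀]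
  rw [h2, inv_comm_pow h0 h1 hs ha]

lemma act_zB (i : ℕ) :
    (x₀ * x) (x₀ (((x₀ * x) ^ i) a)) =
      x₀ (((x₀ * x) ^ (i + (Function.minimalPeriod ⇑(x₀ * x) a - 1))) a) := by
  have h2 := z_pow_x₀_apply h0 h1 hs ha 1 (((x₀ * x) ^ i) a)
  rw [pow_one] at h2
  rw [h2]
  congr 1
  exact inv_comm_pow h0 h1 hs ha i

lemma x₀_maps_SS {p : α} (hp : p ∈ SS x₀ (x₀ * x) a (Function.minimalPeriod ⇑(x₀ * x) a)) :
    x₀ p ∈ SS x₀ (x₀ * x) a (Function.minimalPeriod ⇑(x₀ * x) a) := by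
  rw [mem_SS_iff] at hp ⊢
  rcases hp with ⟨i, hi, rfl⟩ | ⟨i, hi, rfl⟩
  · exact Or.inr ⟨i, hi, rfl⟩
  · exact Or.inl ⟨i, hi, (apply_apply_self h0 _).symm⟩

lemma x₀_mem_SS_iff (p : α) :
    p ∈ SS x₀ (x₀ * x) a (Function.minimalPeriod ⇑(x₀ * x) a) ↔
    x₀ p ∈ SS x₀ (x₀ * x) a (Function.minimalPeriod ⇑(x₀ * x) a) := by
  constructor
  · exact x₀_maps_SS h0 h1 hs ha
  · intro hp
    have := x₀_maps_SS h0 h1 hs ha hp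
    rwa [apply_apply_self h0] at this

lemma x_maps_SS {p : α} (hp : p ∈ SS x₀ (x₀ * x) a (Function.minimalPeriod ⇑(x₀ * x) a)) :
    x p ∈ SS x₀ (x₀ * x) a (Function.minimalPeriod ⇑(x₀ * x) a) := by
  rw [mem_SS_iff] at hp
  rcases hp with ⟨i, hi, rfl⟩ | ⟨i, hi, rfl⟩
  · rw [act_xA h0 h1 hs ha]
    exact Finset.mem_union_right _ (x₀_pow_mem_SB (i + 1))
  · rw [act_xB h0 h1 hs ha]
    exact Finset.mem_union_left _ (pow_mem_SA _)

lemma x_mem_SS_iff (p : α) :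
    p ∈ SS x₀ (x₀ * x) a (Function.minimalPeriod ⇑(x₀ * x) a) ↔
    x p ∈ SS x₀ (x₀ * x) a (Function.minimalPeriod ⇑(x₀ * x) a) := by
  constructor
  · exact x_maps_SS h0 h1 hs ha
  · intro hp
    have := x_maps_SS h0 h1 hs ha hp
    rwa [apply_apply_self h1] at this

lemma z_mem_SS_iff (p : α) :
    p ∈ SS x₀ (x₀ * x) a (Function.minimalPeriod ⇑(x₀ * x) a) ↔
    (x₀ * x) p ∈ SS x₀ (x₀ * x) a (Function.minimalPeriod ⇑(x₀ * x) a) := by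
  calc p ∈ SS x₀ (x₀ * x) a (Function.minimalPeriod ⇑(x₀ * x) a)
      ↔ x p ∈ SS x₀ (x₀ * x) a (Function.minimalPeriod ⇑(x₀ * x) a) :=
        x_mem_SS_iff h0 h1 hs ha p
    _ ↔ x₀ (x p) ∈ SS x₀ (x₀ * x) a (Function.minimalPeriod ⇑(x₀ * x) a) :=
        x₀_mem_SS_iff h0 h1 hs ha (x p)
    _ ↔ (x₀ * x) p ∈ SS x₀ (x₀ * x) a (Function.minimalPeriod ⇑(x₀ * x) a) := Iff.rfl

end Orbit

/-- restriction of `g` to the complement of `S`, as a permutation of `α`. -/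
def cutPerm (g : Perm α) (S : Finset α) (h : ∀ p, p ∉ S ↔ g p ∉ S) : Perm α :=
  ofSubtype (g.subtypePerm (p := fun q => q ∉ S) (fun p => (h p).symm))

lemma cutPerm_apply_mem {g : Perm α} {S : Finset α} {h : ∀ p, p ∉ S ↔ g p ∉ S} {p : α}
    (hp : p ∈ S) : cutPerm g S h p = p :=
  ofSubtype_apply_of_not_mem (p := fun q => q ∉ S) _ (by simpa using hp)

lemma cutPerm_apply_not_mem {g : Perm α} {S : Finset α} {h : ∀ p, p ∉ S ↔ g p ∉ S} {p : α}
    (hp : p ∉ S) : cutPerm g S h p = g p := by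
  rw [cutPerm, Equiv.Perm.ofSubtype_apply_of_mem (p := fun q => q ∉ S) (g.subtypePerm (p := fun q => q ∉ S) (fun p => (h p).symm)) hp]
  rfl

lemma cutPerm_support {g : Perm α} {S : Finset α} {h : ∀ p, p ∉ S ↔ g p ∉ S} :
    (cutPerm g S h).support = g.support \ S := by
  ext p
  by_cases hp : p ∈ S
  · simp [Equiv.Perm.mem_support, cutPerm_apply_mem hp, hp]
  · simp [Equiv.Perm.mem_support, cutPerm_apply_not_mem hp, hp]

lemma cutPerm_invol {g : Perm α} {S : Finset α} {h : ∀ p, p ∉ S ↔ g p ∉ S}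
    (hg : g * g = 1) : cutPerm g S h * cutPerm g S h = 1 := by
  ext p
  by_cases hp : p ∈ S
  · simp [Equiv.Perm.mul_apply, cutPerm_apply_mem hp, cutPerm_apply_mem, hp]
  · have h2 : g p ∉ S := (h p).mp hp
    simp [Equiv.Perm.mul_apply, cutPerm_apply_not_mem hp, cutPerm_apply_not_mem h2,
      apply_apply_self hg]

section Orbit2

variable {x₀ x : Perm α} (h0 : x₀ * x₀ = 1) (h1 : x * x = 1)
    (hs : x.support = x₀.support) {a : α} (ha : a ∈ x₀.support)

include h0 h1 hs ha

lemma mirror_mp : Function.minimalPeriod ⇑(x₀ * x) (x₀ a) = Function.minimalPeriod ⇑(x₀ * x) a := by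
  rw [Function.minimalPeriod_eq_minimalPeriod_iff]
  intro n
  show ((x₀ * x) ^ n) (x₀ a) = x₀ a ↔ ((x₀ * x) ^ n) a = a
  rw [z_pow_x₀_apply h0 h1 hs ha n a]
  constructor
  · intro h
    have h2 := x₀.injective h
    have h3 := congrArg ⇑((x₀ * x) ^ n) h2
    rw [Equiv.Perm.coe_inv, Equiv.apply_symm_apply] at h3
    exact h3.symm
  · intro h
    have h2 : (((x₀ * x) ^ n)⁻¹) a = a := by
      conv_lhs => rw [← h]
      exact Equiv.symm_apply_apply _ _
    rw [h2]

lemma powA_in_supp (hza : (x₀ * x) a ≠ a) (i : ℕ) :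
    ((x₀ * x) ^ i) a ∈ (x₀ * x).support := by
  rw [Equiv.Perm.mem_support]
  intro h
  have h2 : ((x₀ * x) * (x₀ * x) ^ i) a = ((x₀ * x) ^ i) ((x₀ * x) a) := by
    rw [(Commute.refl (x₀ * x)).pow_right i |>.eq]
    rfl
  rw [show ((x₀ * x) * (x₀ * x) ^ i) a = (x₀ * x) (((x₀ * x) ^ i) a) from rfl, h] at h2
  exact hza (((x₀ * x) ^ i).injective h2.symm)

lemma powB_in_supp (hza : (x₀ * x) a ≠ a) (i : ℕ) :
    x₀ (((x₀ * x) ^ i) a) ∈ (x₀ * x).support := by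
  rw [Equiv.Perm.mem_support]
  intro h
  have h2 := z_pow_x₀_apply h0 h1 hs ha 1 (((x₀ * x) ^ i) a)
  rw [pow_one] at h2
  rw [h2] at h
  have h3 := x₀.injective h
  have h4 := congrArg ⇑(x₀ * x) h3
  rw [Equiv.Perm.coe_inv, Equiv.apply_symm_apply] at h4
  exact (Equiv.Perm.mem_support.mp (powA_in_supp h0 h1 hs ha hza i)) h4.symm

lemma sc_A (i : ℕ) : (x₀ * x).SameCycle a (((x₀ * x) ^ i) a) :=
  ⟨(i : ℤ), by rw [zpow_natCast]⟩

lemma not_sc_A_B (i : ℕ) : ¬ (x₀ * x).SameCycle a (x₀ (((x₀ * x) ^ i) a)) := by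
  intro h
  obtain ⟨k, _, hk⟩ := h.exists_pow_eq'
  exact key' h0 h1 hs ha i k hk.symm

lemma sc_B (i : ℕ) : (x₀ * x).SameCycle (x₀ a) (x₀ (((x₀ * x) ^ i) a)) := by
  refine ⟨-(i : ℤ), ?_⟩
  rw [zpow_neg, zpow_natCast]
  have h2 := z_pow_x₀_apply h0 h1 hs ha i (((x₀ * x) ^ i) a)
  rw [Equiv.Perm.coe_inv, Equiv.symm_apply_apply] at h2
  have h3 := congrArg ⇑(((x₀ * x) ^ i)⁻¹) h2
  rw [Equiv.Perm.coe_inv, Equiv.symm_apply_apply] at h3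
  exact h3.symm

lemma not_sc_B_A (i : ℕ) : ¬ (x₀ * x).SameCycle (x₀ a) (((x₀ * x) ^ i) a) := by
  intro h
  obtain ⟨k, _, hk⟩ := h.exists_pow_eq'
  rw [z_pow_x₀_apply h0 h1 hs ha k a, pow_compl h0 h1 hs ha k] at hk
  exact key' h0 h1 hs ha _ i hk

lemma suppA (hza : (x₀ * x) a ≠ a) :
    ((x₀ * x).cycleOf a).support = SA (x₀ * x) a (Function.minimalPeriod ⇑(x₀ * x) a) := by
  ext q
  rw [Equiv.Perm.mem_support_cycleOf_iff]
  constructor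
  · rintro ⟨hsc, -⟩
    obtain ⟨k, -, hk⟩ := hsc.exists_pow_eq'
    exact hk ▸ pow_mem_SA k
  · intro hq
    obtain ⟨i, -, rfl⟩ := mem_SA_iff.mp hq
    exact ⟨sc_A h0 h1 hs ha i, Equiv.Perm.mem_support.mpr hza⟩

lemma suppB (hza : (x₀ * x) a ≠ a) :
    ((x₀ * x).cycleOf (x₀ a)).support = SB x₀ (x₀ * x) a (Function.minimalPeriod ⇑(x₀ * x) a) := by
  have hzb : (x₀ * x) (x₀ a) ≠ x₀ a := by
    have := powB_in_supp h0 h1 hs ha hza 0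
    rw [pow_zero] at this
    simpa [Equiv.Perm.mem_support] using this
  ext q
  rw [Equiv.Perm.mem_support_cycleOf_iff]
  constructor
  · rintro ⟨hsc, -⟩
    obtain ⟨k, -, hk⟩ := hsc.exists_pow_eq'
    rw [z_pow_x₀_apply h0 h1 hs ha k a, pow_compl h0 h1 hs ha k] at hk
    exact hk ▸ x₀_pow_mem_SB _
  · intro hq
    obtain ⟨i, -, rfl⟩ := mem_SB_iff.mp hq
    exact ⟨sc_B h0 h1 hs ha i, Equiv.Perm.mem_support.mpr hzb⟩

lemma cycleType_zS (hza : (x₀ * x) a ≠ a) :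
    ((x₀ * x).cycleOf a * (x₀ * x).cycleOf (x₀ a)).cycleType
      = {Function.minimalPeriod ⇑(x₀ * x) a, Function.minimalPeriod ⇑(x₀ * x) a} := by
  have hzb : (x₀ * x) (x₀ a) ≠ x₀ a := by
    have := powB_in_supp h0 h1 hs ha hza 0
    rw [pow_zero] at this
    simpa [Equiv.Perm.mem_support] using this
  have hc1 := Equiv.Perm.isCycle_cycleOf (x₀ * x) hza
  have hc2 := Equiv.Perm.isCycle_cycleOf (x₀ * x) hzb
  have hdisj : (x₀ * x).cycleOf a |>.Disjoint ((x₀ * x).cycleOf (x₀ a)) := by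
    rw [Equiv.Perm.disjoint_iff_disjoint_support, suppA h0 h1 hs ha hza,
      suppB h0 h1 hs ha hza]
    exact disj_AB h0 h1 hs ha
  rw [hdisj.cycleType_mul, hc1.cycleType, hc2.cycleType, suppA h0 h1 hs ha hza,
    suppB h0 h1 hs ha hza, card_SA, card_SB]
  rfl

lemma zS_on (hza : (x₀ * x) a ≠ a) {p : α}
    (hp : p ∈ SS x₀ (x₀ * x) a (Function.minimalPeriod ⇑(x₀ * x) a)) :
    ((x₀ * x).cycleOf a * (x₀ * x).cycleOf (x₀ a)) p = (x₀ * x) p := by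
  rw [Equiv.Perm.mul_apply]
  rw [mem_SS_iff] at hp
  rcases hp with ⟨i, hi, rfl⟩ | ⟨i, hi, rfl⟩
  · have h2 : ((x₀ * x).cycleOf (x₀ a)) (((x₀ * x) ^ i) a) = ((x₀ * x) ^ i) a :=
      Equiv.Perm.cycleOf_apply_of_not_sameCycle (not_sc_B_A h0 h1 hs ha i)
    rw [h2, (sc_A h0 h1 hs ha i).cycleOf_apply]
  · rw [(sc_B h0 h1 hs ha i).cycleOf_apply]
    rw [act_zB h0 h1 hs ha i]
    exact Equiv.Perm.cycleOf_apply_of_not_sameCycle (not_sc_A_B h0 h1 hs ha _)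

lemma zS_off (hza : (x₀ * x) a ≠ a) {p : α}
    (hp : p ∉ SS x₀ (x₀ * x) a (Function.minimalPeriod ⇑(x₀ * x) a)) :
    ((x₀ * x).cycleOf a * (x₀ * x).cycleOf (x₀ a)) p = p := by
  rw [mem_SS_iff] at hp
  push_neg at hp
  rw [Equiv.Perm.mul_apply]
  have h2 : ((x₀ * x).cycleOf (x₀ a)) p = p := by
    apply Equiv.Perm.cycleOf_apply_of_not_sameCycle
    intro h
    obtain ⟨k, -, hk⟩ := h.exists_pow_eq'
    rw [z_pow_x₀_apply h0 h1 hs ha k a, pow_compl h0 h1 hs ha k] at hk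
    obtain ⟨j, hj, hj2⟩ := mem_SB_iff.mp (x₀_pow_mem_SB (x₀ := x₀) (z := x₀ * x) (a := a) (k * (Function.minimalPeriod ⇑(x₀ * x) a - 1)))
    exact hp.2 j hj (by rw [hj2, hk])
  rw [h2]
  apply Equiv.Perm.cycleOf_apply_of_not_sameCycle
  intro h
  obtain ⟨k, -, hk⟩ := h.exists_pow_eq'
  obtain ⟨j, hj, hj2⟩ := mem_SA_iff.mp (pow_mem_SA (z := x₀ * x) (a := a) k)
  exact hp.1 j hj (by rw [hj2, hk])

lemma fixed_all (hza : (x₀ * x) a = a) {p : α}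
    (hp : p ∈ SS x₀ (x₀ * x) a (Function.minimalPeriod ⇑(x₀ * x) a)) :
    (x₀ * x) p = p := by
  have hfix : ∀ k : ℕ, ((x₀ * x) ^ k) a = a := by
    intro k
    have h2 : Function.IsFixedPt ⇑(x₀ * x) a := hza
    have := h2.iterate k
    rwa [Equiv.Perm.iterate_eq_pow] at this
  rw [mem_SS_iff] at hp
  rcases hp with ⟨i, hi, rfl⟩ | ⟨i, hi, rfl⟩
  · rw [hfix i, hza]
  · rw [hfix i]
    have h2 := z_pow_x₀_apply h0 h1 hs ha 1 a
    rw [pow_one] at h2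
    rw [h2]
    congr 1
    have h3 := congrArg ⇑(x₀ * x)⁻¹ hza
    rw [Equiv.Perm.coe_inv, Equiv.symm_apply_apply] at h3
    exact h3.symm

end Orbit2

lemma supp_z_subset {x₀ x : Perm α} (hs : x.support = x₀.support) :
    (x₀ * x).support ⊆ x₀.support := by
  intro q hq
  by_contra h
  have hx₀q : x₀ q = q := Equiv.Perm.notMem_support.mp h
  have hxq : x q = q := Equiv.Perm.notMem_support.mp (by rwa [hs])
  rw [Equiv.Perm.mem_support] at hq
  exact hq (by rw [Equiv.Perm.mul_apply, hxq, hx₀q])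

lemma gen_card_zero (x₀ x x₀' x' : Perm α)
    (hc0 : x₀.support.card = 0)
    (hsupp : x.support = x₀.support) (hsupp' : x'.support = x₀'.support)
    (hcard : x₀.support.card = x₀'.support.card) :
    ∃ τ : Perm α, τ * x₀ * τ⁻¹ = x₀' ∧ τ * x * τ⁻¹ = x' := by
  rw [Finset.card_eq_zero] at hc0
  rw [hc0] at hcard
  have hc0' : x₀'.support = ∅ := Finset.card_eq_zero.mp hcard.symm
  have h1 : x₀ = 1 := Equiv.Perm.support_eq_empty_iff.mp hc0
  have h2 : x = 1 := Equiv.Perm.support_eq_empty_iff.mp (by rw [hsupp, hc0])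
  have h3 : x₀' = 1 := Equiv.Perm.support_eq_empty_iff.mp hc0'
  have h4 : x' = 1 := Equiv.Perm.support_eq_empty_iff.mp (by rw [hsupp', hc0'])
  exact ⟨1, by simp [h1, h2, h3, h4]⟩

theorem gen_main (m : ℕ) :
    ∀ (x₀ x x₀' x' : Perm α),
    x₀.support.card ≤ m →
    x₀ * x₀ = 1 → x * x = 1 → x₀' * x₀' = 1 → x' * x' = 1 →
    x.support = x₀.support → x'.support = x₀'.support →
    x₀.support.card = x₀'.support.card →
    (x₀ * x).cycleType = (x₀' * x').cycleType →
    ∃ τ : Perm α, τ * x₀ * τ⁻¹ = x₀' ∧ τ * x * τ⁻¹ = x' := by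
  induction m with
  | zero =>
    intro x₀ x x₀' x' hm h0 h1 p0 p1 hs hs' hcard hct
    exact gen_card_zero x₀ x x₀' x' (Nat.le_zero.mp hm) hs hs' hcard
  | succ m ih =>
    intro x₀ x x₀' x' hm h0 h1 p0 p1 hs hs' hcard hct
    by_cases hT0 : x₀.support.card = 0
    · exact gen_card_zero x₀ x x₀' x' hT0 hs hs' hcard
    obtain ⟨a, ha⟩ := Finset.card_pos.mp (Nat.pos_of_ne_zero hT0)
    classical
    set μ := Function.minimalPeriod ⇑(x₀ * x) a with hμdef
    have hμpos : 0 < μ := mp_pos _ _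
    -- find a matching base point b on the primed side
    have hbex : ∃ b, b ∈ x₀'.support ∧ Function.minimalPeriod ⇑(x₀' * x') b = μ := by
      by_cases hza : (x₀ * x) a = a
      · -- μ = 1; pick a point of x₀'.support not in the support of x₀' * x'
        have hμ1 : μ = 1 := Function.minimalPeriod_eq_one_iff_isFixedPt.mpr hza
        have hanotin : a ∉ (x₀ * x).support := by simp [Equiv.Perm.mem_support, hza]
        have hss : (x₀ * x).support ⊂ x₀.support :=
          Finset.ssubset_iff_of_subset (supp_z_subset hs) |>.mpr ⟨a, ha, hanotin⟩
        have hlt : (x₀ * x).support.card < x₀.support.card := Finset.card_lt_card hss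
        have hsummeq : (x₀ * x).support.card = (x₀' * x').support.card := by
          rw [← Equiv.Perm.sum_cycleType, ← Equiv.Perm.sum_cycleType, hct]
        have hlt' : (x₀' * x').support.card < x₀'.support.card := by omega
        have hne : (x₀'.support \ (x₀' * x').support).Nonempty := by
          rw [← Finset.card_pos, Finset.card_sdiff_of_subset (supp_z_subset hs')]
          omega
        obtain ⟨b, hb⟩ := hne
        rw [Finset.mem_sdiff] at hb
        refine ⟨b, hb.1, ?_⟩
        rw [hμ1]
        exact Function.minimalPeriod_eq_one_iff_isFixedPt.mpr
          (Equiv.Perm.notMem_support.mp hb.2)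
      · -- μ ≥ 2; pick a point on a μ-cycle of x₀' * x'
        have haz : a ∈ (x₀ * x).support := Equiv.Perm.mem_support.mpr hza
        have hcmem : (x₀ * x).cycleOf a ∈ (x₀ * x).cycleFactorsFinset :=
          Equiv.Perm.cycleOf_mem_cycleFactorsFinset_iff.mpr haz
        have hcardc : ((x₀ * x).cycleOf a).support.card = μ := by
          rw [suppA h0 h1 hs ha hza, card_SA]
        have hμmem : μ ∈ (x₀ * x).cycleType := by
          rw [Equiv.Perm.cycleType_def, Multiset.mem_map]
          exact ⟨(x₀ * x).cycleOf a, by simpa using hcmem, hcardc⟩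
        rw [hct] at hμmem
        rw [Equiv.Perm.cycleType_def, Multiset.mem_map] at hμmem
        obtain ⟨c', hc'mem, hc'card⟩ := hμmem
        have hc'memf : c' ∈ (x₀' * x').cycleFactorsFinset := by simpa using hc'mem
        have hc'card2 : c'.support.card = μ := hc'card
        have hsupne : c'.support.Nonempty := by
          rw [← Finset.card_pos, hc'card2]; exact hμpos
        obtain ⟨b, hbmem⟩ := hsupne
        have hbz' : b ∈ (x₀' * x').support :=
          Equiv.Perm.mem_cycleFactorsFinset_support_le hc'memf hbmem
        have hb' : b ∈ x₀'.support := supp_z_subset hs' hbz'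
        have hzb : (x₀' * x') b ≠ b := Equiv.Perm.mem_support.mp hbz'
        have hco : c' = (x₀' * x').cycleOf b := Equiv.Perm.cycle_is_cycleOf hbmem hc'memf
        have hcc : ((x₀' * x').cycleOf b).support.card = Function.minimalPeriod ⇑(x₀' * x') b := by
          rw [suppA p0 p1 hs' hb' hzb, card_SA]
        refine ⟨b, hb', ?_⟩
        rw [← hcc, ← hco]
        exact hc'card2
    obtain ⟨b, hb, hμb⟩ := hbex

    -- basic facts specialized to μ on both sides
    have hSsub : SS x₀ (x₀ * x) a μ ⊆ x₀.support := SS_subset h0 h1 hs ha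
    have hSsub' : SS x₀' (x₀' * x') b μ ⊆ x₀'.support := by
      have h5 := SS_subset p0 p1 hs' hb; rwa [hμb] at h5
    have hcardS : (SS x₀ (x₀ * x) a μ).card = 2 * μ := card_SS h0 h1 hs ha
    have hcardS' : (SS x₀' (x₀' * x') b μ).card = 2 * μ := by
      have h5 := card_SS p0 p1 hs' hb; rwa [hμb] at h5
    set S : Finset α := SS x₀ (x₀ * x) a μ with hSdef
    set S' : Finset α := SS x₀' (x₀' * x') b μ with hS'def
    have hmx₀ : ∀ p, p ∈ S ↔ x₀ p ∈ S := x₀_mem_SS_iff h0 h1 hs ha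
    have hmx : ∀ p, p ∈ S ↔ x p ∈ S := x_mem_SS_iff h0 h1 hs ha
    have hmz : ∀ p, p ∈ S ↔ (x₀ * x) p ∈ S := z_mem_SS_iff h0 h1 hs ha
    have hmx₀' : ∀ p, p ∈ S' ↔ x₀' p ∈ S' := by
      intro p; have h5 := x₀_mem_SS_iff p0 p1 hs' hb p; rwa [hμb] at h5
    have hmx' : ∀ p, p ∈ S' ↔ x' p ∈ S' := by
      intro p; have h5 := x_mem_SS_iff p0 p1 hs' hb p; rwa [hμb] at h5
    have hmz' : ∀ p, p ∈ S' ↔ (x₀' * x') p ∈ S' := by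
      intro p; have h5 := z_mem_SS_iff p0 p1 hs' hb p; rwa [hμb] at h5
    -- the local matching map e
    set e : α → α := fun p =>
      if h : ∃ i, i < μ ∧ ((x₀ * x) ^ i) a = p then ((x₀' * x') ^ h.choose) b
      else if h2 : ∃ i, i < μ ∧ x₀ (((x₀ * x) ^ i) a) = p then x₀' (((x₀' * x') ^ h2.choose) b)
      else p with hedef
    have heA : ∀ i, i < μ → e (((x₀ * x) ^ i) a) = ((x₀' * x') ^ i) b := by
      intro i hi
      have hex : ∃ j, j < μ ∧ ((x₀ * x) ^ j) a = ((x₀ * x) ^ i) a := ⟨i, hi, rfl⟩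
      have hspec := hex.choose_spec
      have h6 : hex.choose = i := pow_inj_on (x₀ * x) a hspec.1 hi hspec.2
      simp only [hedef]
      rw [dif_pos hex, h6]
    have heB : ∀ i, i < μ → e (x₀ (((x₀ * x) ^ i) a)) = x₀' (((x₀' * x') ^ i) b) := by
      intro i hi
      have hnex : ¬ ∃ j, j < μ ∧ ((x₀ * x) ^ j) a = x₀ (((x₀ * x) ^ i) a) := by
        rintro ⟨j, hj, hjeq⟩
        exact key' h0 h1 hs ha i j hjeq.symm
      have hex : ∃ j, j < μ ∧ x₀ (((x₀ * x) ^ j) a) = x₀ (((x₀ * x) ^ i) a) := ⟨i, hi, rfl⟩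
      have hspec := hex.choose_spec
      have h6 : hex.choose = i := pow_inj_on (x₀ * x) a hspec.1 hi (x₀.injective hspec.2)
      simp only [hedef]
      rw [dif_neg hnex, dif_pos hex, h6]
    have hmodred' : ∀ k, ((x₀' * x') ^ (k % μ)) b = ((x₀' * x') ^ k) b := by
      intro k; have h5 := mod_red (x₀' * x') b k; rwa [hμb] at h5
    have heA' : ∀ k, e (((x₀ * x) ^ k) a) = ((x₀' * x') ^ k) b := by
      intro k
      rw [← mod_red (x₀ * x) a k, heA (k % μ) (Nat.mod_lt _ hμpos), hmodred' k]
    have heB' : ∀ k, e (x₀ (((x₀ * x) ^ k) a)) = x₀' (((x₀' * x') ^ k) b) := by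
      intro k
      rw [← mod_red (x₀ * x) a k, heB (k % μ) (Nat.mod_lt _ hμpos), hmodred' k]
    have hemaps : ∀ p ∈ S, e p ∈ S' := by
      intro p hp
      rw [hSdef, mem_SS_iff] at hp
      rcases hp with ⟨i, hi, rfl⟩ | ⟨i, hi, rfl⟩
      · rw [heA i hi, hS'def, SS]
        exact Finset.mem_union_left _ (mem_SA_iff.mpr ⟨i, hi, rfl⟩)
      · rw [heB i hi, hS'def, SS]
        exact Finset.mem_union_right _ (mem_SB_iff.mpr ⟨i, hi, rfl⟩)
    have heinj : ∀ p ∈ S, ∀ q ∈ S, e p = e q → p = q := by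
      intro p hp q hq hpq
      rw [hSdef, mem_SS_iff] at hp hq
      have hpow' : ∀ i j, i < μ → j < μ → ((x₀' * x') ^ i) b = ((x₀' * x') ^ j) b → i = j := by
        intro i j hi hj hh
        exact pow_inj_on (x₀' * x') b (by rwa [hμb]) (by rwa [hμb]) hh
      rcases hp with ⟨i, hi, rfl⟩ | ⟨i, hi, rfl⟩ <;> rcases hq with ⟨j, hj, rfl⟩ | ⟨j, hj, rfl⟩
      · rw [heA i hi, heA j hj] at hpq; rw [hpow' i j hi hj hpq]
      · rw [heA i hi, heB j hj] at hpq
        exact absurd hpq.symm (key' p0 p1 hs' hb j i)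
      · rw [heB i hi, heA j hj] at hpq
        exact absurd hpq (key' p0 p1 hs' hb i j)
      · rw [heB i hi, heB j hj] at hpq
        rw [hpow' i j hi hj (x₀'.injective hpq)]
    have heqx₀ : ∀ p ∈ S, e (x₀ p) = x₀' (e p) := by
      intro p hp
      rw [hSdef, mem_SS_iff] at hp
      rcases hp with ⟨i, hi, rfl⟩ | ⟨i, hi, rfl⟩
      · rw [heB i hi, heA i hi]
      · rw [apply_apply_self h0, heA i hi, heB i hi, apply_apply_self p0]
    have heqx : ∀ p ∈ S, e (x p) = x' (e p) := by
      intro p hp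
      rw [hSdef, mem_SS_iff] at hp
      rcases hp with ⟨i, hi, rfl⟩ | ⟨i, hi, rfl⟩
      · rw [act_xA h0 h1 hs ha i, heB' (i+1), heA i hi, act_xA p0 p1 hs' hb i]
      · rw [act_xB h0 h1 hs ha i, heA' _, heB i hi, act_xB p0 p1 hs' hb i, hμb]
    -- the cut permutations
    have hcx₀ : ∀ p, p ∉ S ↔ x₀ p ∉ S := fun p => not_iff_not.mpr (hmx₀ p)
    have hcx : ∀ p, p ∉ S ↔ x p ∉ S := fun p => not_iff_not.mpr (hmx p)
    have hcx₀' : ∀ p, p ∉ S' ↔ x₀' p ∉ S' := fun p => not_iff_not.mpr (hmx₀' p)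
    have hcx' : ∀ p, p ∉ S' ↔ x' p ∉ S' := fun p => not_iff_not.mpr (hmx' p)
    set y₀ := cutPerm x₀ S hcx₀ with hy₀
    set y := cutPerm x S hcx with hy
    set y₀' := cutPerm x₀' S' hcx₀' with hy₀'
    set y' := cutPerm x' S' hcx' with hy'
    have hzcut : ∀ p, (y₀ * y) p = if p ∈ S then p else (x₀ * x) p := by
      intro p
      by_cases hp : p ∈ S
      · rw [if_pos hp]
        rw [Equiv.Perm.mul_apply, hy, hy₀, cutPerm_apply_mem hp, cutPerm_apply_mem hp]
      · rw [if_neg hp, Equiv.Perm.mul_apply, hy, hy₀, cutPerm_apply_not_mem hp,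
          cutPerm_apply_not_mem ((hcx p).mp hp)]
        rfl
    have hzcut' : ∀ p, (y₀' * y') p = if p ∈ S' then p else (x₀' * x') p := by
      intro p
      by_cases hp : p ∈ S'
      · rw [if_pos hp]
        rw [Equiv.Perm.mul_apply, hy', hy₀', cutPerm_apply_mem hp, cutPerm_apply_mem hp]
      · rw [if_neg hp, Equiv.Perm.mul_apply, hy', hy₀', cutPerm_apply_not_mem hp,
          cutPerm_apply_not_mem ((hcx' p).mp hp)]
        rfl
    -- cycle type bookkeeping for the cut products
    have hctcut : (y₀ * y).cycleType = (y₀' * y').cycleType := by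
      by_cases hza : (x₀ * x) a = a
      · have hμ1 : μ = 1 := Function.minimalPeriod_eq_one_iff_isFixedPt.mpr hza
        have hza' : (x₀' * x') b = b :=
          Function.minimalPeriod_eq_one_iff_isFixedPt.mp (by rw [hμb, hμ1])
        have hfixS : ∀ p ∈ S, (x₀ * x) p = p := fun p hp => fixed_all h0 h1 hs ha hza hp
        have hfixS' : ∀ p ∈ S', (x₀' * x') p = p := by
          intro p hp
          apply fixed_all p0 p1 hs' hb hza'
          rwa [hμb]
        have hy0y : y₀ * y = x₀ * x := by
          ext p
          rw [hzcut p]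
          by_cases hp : p ∈ S
          · rw [if_pos hp, hfixS p hp]
          · rw [if_neg hp]
        have hy0y' : y₀' * y' = x₀' * x' := by
          ext p
          rw [hzcut' p]
          by_cases hp : p ∈ S'
          · rw [if_pos hp, hfixS' p hp]
          · rw [if_neg hp]
        rw [hy0y, hy0y']
        exact hct
      · have hμne : μ ≠ 1 := by
          intro h
          exact hza (Function.minimalPeriod_eq_one_iff_isFixedPt.mp (by rw [← hμdef, h]))
        have hzb' : (x₀' * x') b ≠ b := by
          intro h
          exact hμne (by rw [← hμb]; exact Function.minimalPeriod_eq_one_iff_isFixedPt.mpr h)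
        have hdecomp : x₀ * x = ((x₀ * x).cycleOf a * (x₀ * x).cycleOf (x₀ a)) * (y₀ * y) := by
          ext p
          conv_rhs => rw [Equiv.Perm.mul_apply, hzcut p]
          by_cases hp : p ∈ S
          · rw [if_pos hp]
            exact (zS_on h0 h1 hs ha hza hp).symm
          · rw [if_neg hp]
            have hzp : (x₀ * x) p ∉ S := fun hh => hp ((hmz p).mpr hh)
            exact (zS_off h0 h1 hs ha hza hzp).symm
        have hdecomp' : x₀' * x' =
            ((x₀' * x').cycleOf b * (x₀' * x').cycleOf (x₀' b)) * (y₀' * y') := by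
          ext p
          conv_rhs => rw [Equiv.Perm.mul_apply, hzcut' p]
          by_cases hp : p ∈ S'
          · rw [if_pos hp]
            refine (zS_on p0 p1 hs' hb hzb' ?_).symm
            rwa [hμb]
          · rw [if_neg hp]
            have hzp : (x₀' * x') p ∉ S' := fun hh => hp ((hmz' p).mpr hh)
            refine (zS_off p0 p1 hs' hb hzb' ?_).symm
            rwa [hμb]
        have hdisj : ((x₀ * x).cycleOf a * (x₀ * x).cycleOf (x₀ a)).Disjoint (y₀ * y) := by
          refine fun p => ?_
          by_cases hp : p ∈ S
          · right; rw [hzcut p, if_pos hp]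
          · left; exact zS_off h0 h1 hs ha hza hp
        have hdisj' : ((x₀' * x').cycleOf b * (x₀' * x').cycleOf (x₀' b)).Disjoint (y₀' * y') := by
          refine fun p => ?_
          by_cases hp : p ∈ S'
          · right; rw [hzcut' p, if_pos hp]
          · left
            refine zS_off p0 p1 hs' hb hzb' ?_
            rwa [hμb]
        have hctz : (x₀ * x).cycleType = {μ, μ} + (y₀ * y).cycleType := by
          conv_lhs => rw [hdecomp]
          rw [hdisj.cycleType_mul, cycleType_zS h0 h1 hs ha hza]
        have hctz' : (x₀' * x').cycleType = {μ, μ} + (y₀' * y').cycleType := by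
          conv_lhs => rw [hdecomp']
          rw [hdisj'.cycleType_mul, cycleType_zS p0 p1 hs' hb hzb', hμb]
        have h5 := hct
        rw [hctz, hctz'] at h5
        exact add_left_cancel h5
    -- supports and cards of the cut permutations
    have hsupy₀ : y₀.support = x₀.support \ S := cutPerm_support
    have hsupy : y.support = x₀.support \ S := by rw [hy, cutPerm_support, hs]
    have hsupy₀' : y₀'.support = x₀'.support \ S' := cutPerm_support
    have hsupy' : y'.support = x₀'.support \ S' := by rw [hy', cutPerm_support, hs']
    have hcardy : y₀.support.card = x₀.support.card - 2 * μ := by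
      rw [hsupy₀, Finset.card_sdiff_of_subset hSsub, hcardS]
    have hcardy' : y₀'.support.card = x₀'.support.card - 2 * μ := by
      rw [hsupy₀', Finset.card_sdiff_of_subset hSsub', hcardS']
    have hcardle : y₀.support.card ≤ m := by
      rw [hcardy]; omega
    have hcardeq : y₀.support.card = y₀'.support.card := by rw [hcardy, hcardy', hcard]
    obtain ⟨τ₁, hτa, hτb⟩ := ih y₀ y y₀' y' hcardle (cutPerm_invol h0) (cutPerm_invol h1)
      (cutPerm_invol p0) (cutPerm_invol p1) (by rw [hsupy, hsupy₀]) (by rw [hsupy', hsupy₀'])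
      hcardeq hctcut
    have hτap : ∀ p, τ₁ (y₀ p) = y₀' (τ₁ p) := by
      intro p
      have h5 : τ₁ * y₀ = y₀' * τ₁ := by
        calc τ₁ * y₀ = (τ₁ * y₀ * τ₁⁻¹) * τ₁ := by group
          _ = y₀' * τ₁ := by rw [hτa]
      calc τ₁ (y₀ p) = (τ₁ * y₀) p := rfl
        _ = (y₀' * τ₁) p := by rw [h5]
        _ = y₀' (τ₁ p) := rfl
    have hτbp : ∀ p, τ₁ (y p) = y' (τ₁ p) := by
      intro p
      have h5 : τ₁ * y = y' * τ₁ := by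
        calc τ₁ * y = (τ₁ * y * τ₁⁻¹) * τ₁ := by group
          _ = y' * τ₁ := by rw [hτb]
      calc τ₁ (y p) = (τ₁ * y) p := rfl
        _ = (y' * τ₁) p := by rw [h5]
        _ = y' (τ₁ p) := rfl
    have hτmap : ∀ p, p ∈ x₀.support \ S → τ₁ p ∈ x₀'.support \ S' := by
      intro p hp
      have h5 := Equiv.Perm.support_conj (σ := τ₁) (τ := y₀)
      rw [hτa] at h5
      rw [← hsupy₀', h5, Finset.mem_map]
      exact ⟨p, by rwa [hsupy₀], rfl⟩
    -- complement bijection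
    have hccard : (x₀.supportᶜ).card = (x₀'.supportᶜ).card := by
      rw [Finset.card_compl, Finset.card_compl, hcard]
    set Ec := Finset.equivOfCardEq hccard with hEc
    -- the global map
    set F : α → α := fun p =>
      if p ∈ S then e p
      else if hp : p ∈ x₀.support then τ₁ p
      else ↑(Ec ⟨p, by simpa using hp⟩) with hFdef
    have hF1 : ∀ p ∈ S, F p = e p := by
      intro p hp; simp only [hFdef]; rw [if_pos hp]
    have hF2 : ∀ p, p ∉ S → p ∈ x₀.support → F p = τ₁ p := by
      intro p hp hp2; simp only [hFdef]; rw [if_neg hp, dif_pos hp2]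
    have hF3 : ∀ p, p ∉ x₀.support → F p ∉ x₀'.support := by
      intro p hp
      have hpS : p ∉ S := fun h => hp (hSsub h)
      simp only [hFdef]
      rw [if_neg hpS, dif_neg hp]
      have h5 := (Ec ⟨p, by simpa using hp⟩).2
      exact Finset.mem_compl.mp h5
    have hFfix : ∀ p, p ∉ x₀.support → x₀' (F p) = F p ∧ x' (F p) = F p := by
      intro p hp
      have h5 := hF3 p hp
      constructor
      · exact Equiv.Perm.notMem_support.mp h5
      · apply Equiv.Perm.notMem_support.mp
        rwa [hs']
    have hFinj : Function.Injective F := by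
      have hcase : ∀ p q, p ∈ S → F p = F q → q ∈ S := by
        intro p q hpS hpq
        by_contra hqS
        have h7 : F p ∈ S' := by rw [hF1 p hpS]; exact hemaps p hpS
        by_cases hqT : q ∈ x₀.support
        · have h6 : F q ∈ x₀'.support \ S' := by
            rw [hF2 q hqS hqT]
            exact hτmap q (Finset.mem_sdiff.mpr ⟨hqT, hqS⟩)
          rw [hpq] at h7
          exact (Finset.mem_sdiff.mp h6).2 h7
        · have h6 : F q ∉ x₀'.support := hF3 q hqT
          rw [hpq] at h7
          exact h6 (hSsub' h7)
      have hcase2 : ∀ p q, p ∉ S → p ∈ x₀.support → F p = F q → q ∉ S → q ∈ x₀.support := by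
        intro p q hpS hpT hpq hqS
        by_contra hqT
        have h6 : F p ∈ x₀'.support \ S' := by
          rw [hF2 p hpS hpT]
          exact hτmap p (Finset.mem_sdiff.mpr ⟨hpT, hpS⟩)
        have h7 : F q ∉ x₀'.support := hF3 q hqT
        rw [← hpq] at h7
        exact h7 (Finset.mem_sdiff.mp h6).1
      intro p q hpq
      by_cases hpS : p ∈ S
      · have hqS : q ∈ S := hcase p q hpS hpq
        exact heinj p hpS q hqS (by rw [← hF1 p hpS, ← hF1 q hqS, hpq])
      · by_cases hqS : q ∈ S
        · exact absurd (hcase q p hqS hpq.symm) hpS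
        · by_cases hpT : p ∈ x₀.support
          · have hqT : q ∈ x₀.support := hcase2 p q hpS hpT hpq hqS
            apply τ₁.injective
            rw [← hF2 p hpS hpT, ← hF2 q hqS hqT, hpq]
          · by_cases hqT : q ∈ x₀.support
            · exact absurd (hcase2 q p hqS hqT hpq.symm hpS) hpT
            · have h6 : F p = ↑(Ec ⟨p, by simpa using hpT⟩) := by
                have hpS2 : p ∉ S := hpS
                simp only [hFdef]
                rw [if_neg hpS2, dif_neg hpT]
              have h7 : F q = ↑(Ec ⟨q, by simpa using hqT⟩) := by
                have hqS2 : q ∉ S := hqS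
                simp only [hFdef]
                rw [if_neg hqS2, dif_neg hqT]
              rw [h6, h7] at hpq
              have h8 := Ec.injective (Subtype.coe_injective hpq)
              exact congrArg Subtype.val h8
    set τ : Perm α := Equiv.ofBijective F (Finite.injective_iff_bijective.mp hFinj) with hτdef
    have hτco : ∀ p, τ p = F p := fun p => rfl
    have hcomm0 : ∀ p, F (x₀ p) = x₀' (F p) := by
      intro p
      by_cases hpS : p ∈ S
      · rw [hF1 p hpS, hF1 (x₀ p) ((hmx₀ p).mp hpS)]
        exact heqx₀ p hpS
      · by_cases hpT : p ∈ x₀.support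
        · have hx₀pS : x₀ p ∉ S := fun h => hpS ((hmx₀ p).mpr h)
          have hx₀pT : x₀ p ∈ x₀.support := by rwa [Equiv.Perm.apply_mem_support]
          have hττ : τ₁ p ∈ x₀'.support \ S' := hτmap p (Finset.mem_sdiff.mpr ⟨hpT, hpS⟩)
          rw [hF2 (x₀ p) hx₀pS hx₀pT, hF2 p hpS hpT]
          have h8 : x₀ p = y₀ p := (cutPerm_apply_not_mem hpS).symm
          rw [h8, hτap p, hy₀']
          exact cutPerm_apply_not_mem (Finset.mem_sdiff.mp hττ).2
        · have hfix : x₀ p = p := Equiv.Perm.notMem_support.mp hpT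
          rw [hfix, (hFfix p hpT).1]
    have hcomm1 : ∀ p, F (x p) = x' (F p) := by
      intro p
      by_cases hpS : p ∈ S
      · rw [hF1 p hpS, hF1 (x p) ((hmx p).mp hpS)]
        exact heqx p hpS
      · by_cases hpT : p ∈ x₀.support
        · have hxpS : x p ∉ S := fun h => hpS ((hmx p).mpr h)
          have hxpT : x p ∈ x₀.support := by
            rw [← hs, Equiv.Perm.apply_mem_support, hs]
            exact hpT
          have hττ : τ₁ p ∈ x₀'.support \ S' := hτmap p (Finset.mem_sdiff.mpr ⟨hpT, hpS⟩)
          rw [hF2 (x p) hxpS hxpT, hF2 p hpS hpT]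
          have h8 : x p = y p := (cutPerm_apply_not_mem hpS).symm
          rw [h8, hτbp p, hy']
          exact cutPerm_apply_not_mem (Finset.mem_sdiff.mp hττ).2
        · have hfix : x p = p := by
            apply Equiv.Perm.notMem_support.mp
            rwa [hs]
          rw [hfix, (hFfix p hpT).2]
    have hgl0 : τ * x₀ = x₀' * τ := by
      ext p
      show τ (x₀ p) = x₀' (τ p)
      rw [hτco, hτco]
      exact hcomm0 p
    have hgl1 : τ * x = x' * τ := by
      ext p
      show τ (x p) = x' (τ p)
      rw [hτco, hτco]
      exact hcomm1 p
    refine ⟨τ, ?_, ?_⟩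
    · calc τ * x₀ * τ⁻¹ = x₀' * τ * τ⁻¹ := by rw [hgl0]
        _ = x₀' := by group
    · calc τ * x * τ⁻¹ = x' * τ * τ⁻¹ := by rw [hgl1]
        _ = x' := by group

end StabOrbitAux

/-- Two matchings `x, y` lie in the same orbit of the stabilizer of a base
matching `x₀` if and only if the cycle types of `x₀ * x` and `x₀ * y` coincide (i.e. they have
the same generalized distance to `x₀`). -/
theorem stabilizer_orbit_iff_cycleType_eq (n : ℕ) (hn : 1 ≤ n)
    (x₀ x y : Equiv.Perm (Fin (2 * n)))
    (hx₀ : x₀ * x₀ = 1 ∧ ∀ i, x₀ i ≠ i)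
    (hx : x * x = 1 ∧ ∀ i, x i ≠ i)
    (hy : y * y = 1 ∧ ∀ i, y i ≠ i) :
    (∃ π : Equiv.Perm (Fin (2 * n)), π * x₀ * π⁻¹ = x₀ ∧ π * x * π⁻¹ = y)
      ↔ (x₀ * x).cycleType = (x₀ * y).cycleType := by
  constructor
  · rintro ⟨π, hπ0, hπx⟩
    have h : x₀ * y = π * (x₀ * x) * π⁻¹ := by
      rw [← hπx]
      conv_lhs => rw [← hπ0]
      group
    rw [h, Equiv.Perm.cycleType_conj]
  · intro hct
    have hsx : x.support = x₀.support := by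
      ext i
      simp [Equiv.Perm.mem_support, hx.2 i, hx₀.2 i]
    have hsy : y.support = x₀.support := by
      ext i
      simp [Equiv.Perm.mem_support, hy.2 i, hx₀.2 i]
    exact StabOrbitAux.gen_main (Fintype.card (Fin (2 * n))) x₀ x x₀ y
      (Finset.card_le_univ _) hx₀.1 hx.1 hx₀.1 hy.1 hsx hsy rfl hct
end

section
/- Let n ≥ 1 and let x, y be fixed-point-free involutions of Fin (2n). Then every cycle length appears in the cycle type of x * y with even multiplicity, and the number of fixed points of x * y is even. (Equivalently, the connected components of the graph whose edge set is the union of the pairs of x and the pairs of y are disjoint cycles of even length.) -/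
open Equiv Equiv.Perm Finset

/-- A finset with a fixed-point-free involution has even cardinality. -/
private lemma even_card_of_fpf_invol {α : Type*} [DecidableEq α] (f : α → α) :
    ∀ s : Finset α, (∀ a ∈ s, f a ∈ s) → (∀ a ∈ s, f (f a) = a) → (∀ a ∈ s, f a ≠ a) →
    Even s.card := by
  intro s
  induction s using Finset.strongInduction with
  | _ s ih =>
    intro hmem hinv hne
    rcases s.eq_empty_or_nonempty with rfl | ⟨a, ha⟩
    · simp
    · have hfa : f a ∈ s := hmem a ha
      have hane : f a ≠ a := hne a ha
      set t := (s.erase a).erase (f a) with ht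
      have htss : t ⊆ s := (Finset.erase_subset _ _).trans (Finset.erase_subset _ _)
      have hmem_t : ∀ b ∈ t, b ∈ s ∧ b ≠ a ∧ b ≠ f a := by
        intro b hb
        simp only [ht, Finset.mem_erase] at hb
        exact ⟨hb.2.2, hb.2.1, hb.1⟩
      have hat : a ∉ t := by simp [ht]
      have h1 : Even t.card := by
        refine ih t ((Finset.ssubset_iff_of_subset htss).mpr ⟨a, ha, hat⟩) ?_ ?_ ?_
        · intro b hb
          obtain ⟨hbs, hba, hbfa⟩ := hmem_t b hb
          simp only [ht, Finset.mem_erase]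
          refine ⟨?_, ?_, hmem b hbs⟩
          · intro h
            exact hba (by rw [← hinv b hbs, h, hinv a ha])
          · intro h
            exact hbfa (by rw [← hinv b hbs, h])
        · intro b hb; exact hinv b (hmem_t b hb).1
        · intro b hb; exact hne b (hmem_t b hb).1
      have hfa' : f a ∈ s.erase a := Finset.mem_erase.mpr ⟨hane, hfa⟩
      have c1 : (s.erase a).card = s.card - 1 := Finset.card_erase_of_mem ha
      have c2 : t.card = (s.erase a).card - 1 := Finset.card_erase_of_mem hfa'
      have c3 : 1 ≤ (s.erase a).card := Finset.card_pos.mpr ⟨_, hfa'⟩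
      have c4 : 1 ≤ s.card := Finset.card_pos.mpr ⟨_, ha⟩
      obtain ⟨r, hr⟩ := h1
      exact ⟨r + 1, by omega⟩

/-- For fixed-point-free involutions `x, y`, no point is in the same cycle of `x * y`
as its image under `x`. -/
private lemma key_not_sameCycle {α : Type*} (x y : Equiv.Perm α)
    (hx1 : x * x = 1) (hx2 : ∀ i, x i ≠ i) (hy1 : y * y = 1) (hy2 : ∀ i, y i ≠ i) (i : α) :
    ¬ (x * y).SameCycle i (x i) := by
  rintro ⟨k, hk⟩
  have hxinv : x⁻¹ = x := inv_eq_of_mul_eq_one_right hx1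
  have hyinv : y⁻¹ = y := inv_eq_of_mul_eq_one_right hy1
  have hconj : x * (x * y) * x⁻¹ = (x * y)⁻¹ := by
    rw [mul_inv_rev, hxinv, hyinv, ← mul_assoc x x y, hx1, one_mul]
  set p := x * y with hp
  have step : ∀ j : ℤ, x ((p ^ j) i) = (p ^ (k - j)) i := by
    intro j
    have h1 : x * p ^ j * x⁻¹ = p ^ (-j) := by
      rw [← conj_zpow, hconj, inv_zpow, ← zpow_neg]
    have h2 : (x * p ^ j * x⁻¹) (x i) = (p ^ (-j)) (x i) := by rw [h1]
    simp only [Equiv.Perm.mul_apply, Equiv.Perm.inv_def, Equiv.symm_apply_apply] at h2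
    rw [h2, ← hk, ← Equiv.Perm.mul_apply, ← zpow_add, neg_add_eq_sub]
  rcases Int.even_or_odd k with ⟨m, hm⟩ | ⟨m, hm⟩
  · have hs := step m
    rw [show k - m = m by omega] at hs
    exact hx2 _ hs
  · have hs := step (m + 1)
    rw [show k - (m + 1) = m by omega] at hs
    apply hy2 ((p ^ m) i)
    have hyx : y = x * p := by rw [hp, ← mul_assoc, hx1, one_mul]
    calc y ((p ^ m) i) = x (p ((p ^ m) i)) := by rw [hyx]; rfl
      _ = x ((p ^ (m + 1)) i) := by
          congr 1
          rw [show (m : ℤ) + 1 = 1 + m from by ring, zpow_one_add]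
          rfl
      _ = (p ^ m) i := hs

private lemma inv_mem_cycleFactorsFinset_inv {α : Type*} [Fintype α] [DecidableEq α]
    {g c : Equiv.Perm α} (hc : c ∈ g.cycleFactorsFinset) :
    c⁻¹ ∈ g⁻¹.cycleFactorsFinset := by
  rw [Equiv.Perm.mem_cycleFactorsFinset_iff] at hc ⊢
  refine ⟨hc.1.inv, fun a ha => ?_⟩
  rw [Equiv.Perm.support_inv] at ha
  have hb : c⁻¹ a ∈ c.support := by
    rw [← Equiv.Perm.apply_mem_support, ← Equiv.Perm.mul_apply, mul_inv_cancel, Equiv.Perm.one_apply]; exact ha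
  have h2 := hc.2 _ hb
  rw [← Equiv.Perm.mul_apply, mul_inv_cancel, Equiv.Perm.one_apply] at h2
  symm
  rw [Equiv.Perm.inv_eq_iff_eq]
  exact h2

/-- For two fixed-point-free involutions `x, y` of `Fin (2n)`, every cycle
length occurs in the cycle type of `x * y` with even multiplicity, and the number of fixed
points of `x * y` is even. -/
theorem product_of_matchings_even_cycle_structure (n : ℕ) (hn : 1 ≤ n)
    (x y : Equiv.Perm (Fin (2 * n)))
    (hx : x * x = 1 ∧ ∀ i, x i ≠ i)
    (hy : y * y = 1 ∧ ∀ i, y i ≠ i) :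
    (∀ ℓ : ℕ, Even ((x * y).cycleType.count ℓ)) ∧
    Even ((Finset.univ.filter fun i => (x * y) i = i).card) := by
  obtain ⟨hx1, hx2⟩ := hx
  obtain ⟨hy1, hy2⟩ := hy
  have hxinv : x⁻¹ = x := inv_eq_of_mul_eq_one_right hx1
  have hyinv : y⁻¹ = y := inv_eq_of_mul_eq_one_right hy1
  have hconj : x * (x * y) * x⁻¹ = (x * y)⁻¹ := by
    rw [mul_inv_rev, hxinv, hyinv, ← mul_assoc x x y, hx1, one_mul]
  have hconjp : x * (x * y)⁻¹ * x⁻¹ = x * y := by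
    calc x * (x * y)⁻¹ * x⁻¹ = (x * (x * y) * x⁻¹)⁻¹ := by group
      _ = x * y := by rw [hconj, inv_inv]
  constructor
  · intro ℓ
    have hcount : (x * y).cycleType.count ℓ =
        ((x * y).cycleFactorsFinset.filter
          (fun c => ℓ = (Finset.card ∘ Equiv.Perm.support) c)).card := by
      rw [Equiv.Perm.cycleType, Multiset.count_map]
      rfl
    rw [hcount]
    refine even_card_of_fpf_invol (fun c => x * c⁻¹ * x⁻¹) _ ?_ ?_ ?_
    · intro c hc
      simp only [Finset.mem_filter, Function.comp_apply] at hc ⊢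
      constructor
      · have h1 := inv_mem_cycleFactorsFinset_inv hc.1
        have h2 := (Equiv.Perm.mem_cycleFactorsFinset_conj (x * y)⁻¹ x c⁻¹).mpr h1
        rwa [hconjp] at h2
      · rw [Equiv.Perm.card_support_conj, Equiv.Perm.support_inv]
        exact hc.2
    · intro c hc
      calc x * (x * c⁻¹ * x⁻¹)⁻¹ * x⁻¹ = (x * x) * c * (x * x)⁻¹ := by group
        _ = c := by rw [hx1, one_mul, inv_one, mul_one]
    · intro c hc h
      simp only [Finset.mem_filter] at hc
      obtain ⟨a, ha⟩ := (Equiv.Perm.mem_cycleFactorsFinset_iff.mp hc.1).1.nonempty_support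
      have hxa : x a ∈ c.support := by
        rw [← h, Equiv.Perm.support_conj, Finset.mem_map]
        exact ⟨a, by rwa [Equiv.Perm.support_inv], rfl⟩
      have hc' : c = (x * y).cycleOf a := Equiv.Perm.cycle_is_cycleOf ha hc.1
      rw [hc'] at hxa
      exact key_not_sameCycle x y hx1 hx2 hy1 hy2 a
        (Equiv.Perm.mem_support_cycleOf_iff.mp hxa).1
  · refine even_card_of_fpf_invol x _ ?_ ?_ ?_
    · intro i hi
      simp only [Finset.mem_filter, Finset.mem_univ, true_and] at hi ⊢
      have h0 : x (y i) = i := hi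
      have hyi : y i = x i := by
        have h1 := congrArg x h0
        rwa [← Equiv.Perm.mul_apply, hx1, Equiv.Perm.one_apply] at h1
      show x (y (x i)) = x i
      rw [← hyi, ← Equiv.Perm.mul_apply y y, hy1, Equiv.Perm.one_apply, hyi]
    · intro i _
      rw [← Equiv.Perm.mul_apply, hx1, Equiv.Perm.one_apply]
    · intro i _
      exact hx2 i
end

section
/- Let n ≥ 2 and let x be a fixed-point-free involution of Fin (2n). Then the number of fixed-point-free involutions y of Fin (2n) such that the cycle type of x * y equals the multiset {2, 2} is exactly n(n−1). (Equivalently, each vertex of the quotient Cayley graph of matchings has exactly n(n−1) neighbors.) -/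
set_option linter.unusedSectionVars false

open Equiv Equiv.Perm Finset

section Helpers

variable {α : Type*} [DecidableEq α] [Fintype α]

lemma qcgd_xx {x : Perm α} (hx1 : x * x = 1) : ∀ i, x (x i) = i := by
  intro i
  have := congrArg (fun p : Perm α => p i) hx1
  simpa using this

lemma qcgd_dist {x : Perm α} (hx1 : x * x = 1) (hx2 : ∀ i, x i ≠ i) {a c : α}
    (h1 : c ≠ a) (h2 : c ≠ x a) :
    a ≠ c ∧ a ≠ x a ∧ a ≠ x c ∧ c ≠ x a ∧ c ≠ x c ∧ x a ≠ x c := by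
  refine ⟨h1.symm, (hx2 a).symm, ?_, h2, (hx2 c).symm, ?_⟩
  · intro h
    exact h2 (show x a = c by rw [h, qcgd_xx hx1]).symm
  · intro h
    exact h1.symm (x.injective h)

lemma qcgd_disj {x : Perm α} (hx1 : x * x = 1) (hx2 : ∀ i, x i ≠ i) {a c : α}
    (h1 : c ≠ a) (h2 : c ≠ x a) :
    (Equiv.swap a c).Disjoint (Equiv.swap (x a) (x c)) := by
  obtain ⟨d1, d2, d3, d4, d5, d6⟩ := qcgd_dist hx1 hx2 h1 h2
  rw [Equiv.Perm.disjoint_iff_disjoint_support, Equiv.Perm.support_swap d1,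
    Equiv.Perm.support_swap d6, Finset.disjoint_left]
  intro i hi hj
  simp only [Finset.mem_insert, Finset.mem_singleton] at hi hj
  rcases hi with rfl | rfl <;> rcases hj with h | h
  exacts [d2 h, d3 h, h2 h, d5 h]

lemma qcgd_cycleType {x : Perm α} (hx1 : x * x = 1) (hx2 : ∀ i, x i ≠ i) {a c : α}
    (h1 : c ≠ a) (h2 : c ≠ x a) :
    (Equiv.swap a c * Equiv.swap (x a) (x c)).cycleType = {2, 2} := by
  obtain ⟨d1, d2, d3, d4, d5, d6⟩ := qcgd_dist hx1 hx2 h1 h2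
  rw [Equiv.Perm.Disjoint.cycleType_mul (qcgd_disj hx1 hx2 h1 h2), (isCycle_swap d1).cycleType,
    (isCycle_swap d6).cycleType, Equiv.Perm.support_swap d1, Equiv.Perm.support_swap d6]
  have e1 : ({a, c} : Finset α).card = 2 := by
    rw [Finset.card_insert_of_notMem (by simpa using d1), Finset.card_singleton]
  have e2 : ({x a, x c} : Finset α).card = 2 := by
    rw [Finset.card_insert_of_notMem (by simpa using d6), Finset.card_singleton]
  rw [e1, e2]
  rfl

lemma qcgd_comm {x : Perm α} (hx1 : x * x = 1) (hx2 : ∀ i, x i ≠ i) {a c : α}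
    (h1 : c ≠ a) (h2 : c ≠ x a) :
    x * (Equiv.swap a c * Equiv.swap (x a) (x c))
      = (Equiv.swap a c * Equiv.swap (x a) (x c)) * x := by
  have hxinv : x⁻¹ = x := inv_eq_of_mul_eq_one_right hx1
  have e1 : Equiv.swap (x a) (x c) = x * Equiv.swap a c * x⁻¹ :=
    Equiv.swap_apply_apply x a c
  have e2 : Equiv.swap a c = x * Equiv.swap (x a) (x c) * x⁻¹ := by
    have := Equiv.swap_apply_apply x (x a) (x c)
    rw [qcgd_xx hx1, qcgd_xx hx1] at this
    exact this
  have hcomm := (qcgd_disj hx1 hx2 h1 h2).commute.eq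
  calc x * (Equiv.swap a c * Equiv.swap (x a) (x c))
      = (x * Equiv.swap a c * x⁻¹) * (x * Equiv.swap (x a) (x c) * x⁻¹) * x := by
        group
    _ = Equiv.swap (x a) (x c) * Equiv.swap a c * x := by rw [← e1, ← e2]
    _ = (Equiv.swap a c * Equiv.swap (x a) (x c)) * x := by rw [hcomm]

lemma qcgd_inv {x : Perm α} (hx1 : x * x = 1) (hx2 : ∀ i, x i ≠ i) {a c : α}
    (h1 : c ≠ a) (h2 : c ≠ x a) :
    (Equiv.swap a c * Equiv.swap (x a) (x c)) * (Equiv.swap a c * Equiv.swap (x a) (x c)) = 1 := by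
  have hcomm := (qcgd_disj hx1 hx2 h1 h2).commute.eq
  have h : (Equiv.swap a c * Equiv.swap (x a) (x c))⁻¹
      = Equiv.swap a c * Equiv.swap (x a) (x c) := by
    rw [mul_inv_rev, Equiv.swap_inv, Equiv.swap_inv, hcomm]
  nth_rewrite 2 [← h]
  exact mul_inv_cancel _

lemma qcgd_ne {x : Perm α} (hx1 : x * x = 1) (hx2 : ∀ i, x i ≠ i) {a c : α}
    (h1 : c ≠ a) (h2 : c ≠ x a) :
    ∀ i, (Equiv.swap a c * Equiv.swap (x a) (x c)) i ≠ x i := by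
  obtain ⟨d1, d2, d3, d4, d5, d6⟩ := qcgd_dist hx1 hx2 h1 h2
  intro i
  rcases eq_or_ne i a with rfl | ha
  · rw [Equiv.Perm.mul_apply, Equiv.swap_apply_of_ne_of_ne d2 d3, Equiv.swap_apply_left]
    exact h2
  rcases eq_or_ne i c with rfl | hc
  · rw [Equiv.Perm.mul_apply, Equiv.swap_apply_of_ne_of_ne d4 d5, Equiv.swap_apply_right]
    exact d3
  rcases eq_or_ne i (x a) with rfl | hxa
  · rw [Equiv.Perm.mul_apply, Equiv.swap_apply_left,
      Equiv.swap_apply_of_ne_of_ne d3.symm d5.symm, qcgd_xx hx1]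
    exact d3.symm
  rcases eq_or_ne i (x c) with rfl | hxc
  · rw [Equiv.Perm.mul_apply, Equiv.swap_apply_right,
      Equiv.swap_apply_of_ne_of_ne d2.symm d4.symm, qcgd_xx hx1]
    exact d4.symm
  · rw [Equiv.Perm.mul_apply, Equiv.swap_apply_of_ne_of_ne hxa hxc,
      Equiv.swap_apply_of_ne_of_ne ha hc]
    exact (hx2 i).symm

end Helpers

section Recon

variable {α : Type*} [DecidableEq α] [Fintype α]

lemma qcgd_recon {x w : Perm α} (hx1 : x * x = 1) (hx2 : ∀ i, x i ≠ i)
    (hw2 : w * w = 1) (hcomm : x * w = w * x) (hsupp : w.support.card = 4)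
    {a : α} (ha : w a ≠ a) (hne : w a ≠ x a) :
    w = Equiv.swap a (w a) * Equiv.swap (x a) (x (w a)) := by
  have hww : ∀ i, w (w i) = i := qcgd_xx hw2
  have hcw : ∀ i, w (x i) = x (w i) := by
    intro i
    have := congrArg (fun p : Perm α => p i) hcomm
    simpa using this.symm
  obtain ⟨d1, d2, d3, d4, d5, d6⟩ := qcgd_dist hx1 hx2 ha hne
  set b := w a with hb
  -- the four points
  have hsub : ({a, b, x a, x b} : Finset α) ⊆ w.support := by
    intro i hi
    simp only [Finset.mem_insert, Finset.mem_singleton] at hi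
    rw [Equiv.Perm.mem_support]
    rcases hi with rfl | rfl | rfl | rfl
    · exact fun h => d1 h.symm
    · rw [hww]; exact fun h => d1 h
    · rw [hcw]; exact fun h => d1 (x.injective h).symm
    · rw [hcw, hww]; exact fun h => d1 (x.injective h)
  have hcard : ({a, b, x a, x b} : Finset α).card = 4 := by
    rw [Finset.card_insert_of_notMem (by simp [d1, d2, d3]),
      Finset.card_insert_of_notMem (by simp [d4, d5]),
      Finset.card_insert_of_notMem (by simp [d6]), Finset.card_singleton]
  have hset : ({a, b, x a, x b} : Finset α) = w.support :=
    Finset.eq_of_subset_of_card_le hsub (by rw [hsupp, hcard])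
  ext i
  by_cases hi : i ∈ ({a, b, x a, x b} : Finset α)
  · simp only [Finset.mem_insert, Finset.mem_singleton] at hi
    rcases hi with rfl | rfl | rfl | rfl
    · rw [Equiv.Perm.mul_apply, Equiv.swap_apply_of_ne_of_ne d2 d3, Equiv.swap_apply_left]
    · rw [Equiv.Perm.mul_apply, Equiv.swap_apply_of_ne_of_ne d4 d5, Equiv.swap_apply_right, hww]
    · rw [Equiv.Perm.mul_apply, Equiv.swap_apply_left,
        Equiv.swap_apply_of_ne_of_ne d3.symm d5.symm, hcw]
    · rw [Equiv.Perm.mul_apply, Equiv.swap_apply_right,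
        Equiv.swap_apply_of_ne_of_ne d2.symm d4.symm, hcw, hww]
  · have hwi : w i = i := by
      rw [← Equiv.Perm.notMem_support, ← hset]; exact hi
    simp only [Finset.mem_insert, Finset.mem_singleton, not_or] at hi
    obtain ⟨e1, e2, e3, e4⟩ := hi
    rw [hwi, Equiv.Perm.mul_apply, Equiv.swap_apply_of_ne_of_ne e3 e4,
      Equiv.swap_apply_of_ne_of_ne e1 e2]

end Recon



/-- For `n ≥ 2` and a matching `x` on `2n` points, the number of matchings `y`
with `(x * y).cycleType = {2, 2}` (the neighbors of `x` in the quotient Cayley graph) is exactly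
`n(n−1)`. -/
theorem quotient_cayley_graph_degree (n : ℕ) (hn : 2 ≤ n)
    (x : Equiv.Perm (Fin (2 * n)))
    (hx : x * x = 1 ∧ ∀ i, x i ≠ i) :
    (Finset.univ.filter fun y : Equiv.Perm (Fin (2 * n)) =>
        y * y = 1 ∧ (∀ i, y i ≠ i) ∧ (x * y).cycleType = {2, 2}).card
      = n * (n - 1) := by
  classical
  obtain ⟨hx1, hx2⟩ := hx
  set S := (Finset.univ.filter fun y : Equiv.Perm (Fin (2 * n)) =>
        y * y = 1 ∧ (∀ i, y i ≠ i) ∧ (x * y).cycleType = {2, 2}) with hS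
  set T : Finset (Fin (2 * n) × Fin (2 * n)) :=
    Finset.univ.filter (fun p => p.2 ≠ p.1 ∧ p.2 ≠ x p.1) with hT
  set F : Fin (2 * n) × Fin (2 * n) → Equiv.Perm (Fin (2 * n)) :=
    fun p => x * (Equiv.swap p.1 p.2 * Equiv.swap (x p.1) (x p.2)) with hF
  have hmem : ∀ p ∈ T, F p ∈ S := by
    rintro ⟨a, c⟩ hp
    simp only [hT, Finset.mem_filter, Finset.mem_univ, true_and] at hp
    obtain ⟨h1, h2⟩ := hp
    have hc := qcgd_comm hx1 hx2 h1 h2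
    have hz := qcgd_inv hx1 hx2 h1 h2
    rw [hS, Finset.mem_filter]
    refine ⟨Finset.mem_univ _, ?_, ?_, ?_⟩
    · show (x * (Equiv.swap a c * Equiv.swap (x a) (x c)))
        * (x * (Equiv.swap a c * Equiv.swap (x a) (x c))) = 1
      calc (x * (Equiv.swap a c * Equiv.swap (x a) (x c)))
        * (x * (Equiv.swap a c * Equiv.swap (x a) (x c)))
          = x * ((Equiv.swap a c * Equiv.swap (x a) (x c)) * x)
            * (Equiv.swap a c * Equiv.swap (x a) (x c)) := by group
        _ = x * (x * (Equiv.swap a c * Equiv.swap (x a) (x c)))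
            * (Equiv.swap a c * Equiv.swap (x a) (x c)) := by rw [← hc]
        _ = (x * x) * ((Equiv.swap a c * Equiv.swap (x a) (x c))
            * (Equiv.swap a c * Equiv.swap (x a) (x c))) := by group
        _ = 1 := by rw [hx1, hz, one_mul]
    · intro i hcon
      have h := congrArg x hcon
      rw [Equiv.Perm.mul_apply, qcgd_xx hx1] at h
      exact qcgd_ne hx1 hx2 h1 h2 i h
    · show (x * (x * (Equiv.swap a c * Equiv.swap (x a) (x c)))).cycleType = {2, 2}
      rw [← mul_assoc, hx1, one_mul]
      exact qcgd_cycleType hx1 hx2 h1 h2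
  have hfib : ∀ y ∈ S, (T.filter fun p => F p = y).card = 4 := by
    intro y hy
    simp only [hS, Finset.mem_filter, Finset.mem_univ, true_and] at hy
    obtain ⟨hy1, hy2, hy3⟩ := hy
    have hw2 : (x * y) * (x * y) = 1 := by
      have h := Equiv.Perm.lcm_cycleType (x * y)
      rw [hy3] at h
      have ho : orderOf (x * y) = 2 := by rw [← h]; decide
      have hp := pow_orderOf_eq_one (x * y)
      rw [ho, pow_two] at hp
      exact hp
    have hcomm : x * (x * y) = (x * y) * x := by
      have hxinv : x⁻¹ = x := inv_eq_of_mul_eq_one_right hx1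
      have hyinv : y⁻¹ = y := inv_eq_of_mul_eq_one_right hy1
      have h := inv_eq_of_mul_eq_one_right hw2
      rw [mul_inv_rev, hxinv, hyinv] at h
      calc x * (x * y) = x * (y * x) := by rw [h]
        _ = (x * y) * x := by rw [← mul_assoc]
    have hsupp : (x * y).support.card = 4 := by
      rw [← Equiv.Perm.sum_cycleType, hy3]; decide
    have himg : T.filter (fun p => F p = y)
        = (x * y).support.image (fun a => (a, (x * y) a)) := by
      ext ⟨a, c⟩
      simp only [hT, hF, Finset.mem_filter, Finset.filter_filter, Finset.mem_univ, true_and,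
        Finset.mem_image]
      constructor
      · rintro ⟨⟨h1, h2⟩, hFp⟩
        obtain ⟨d1, d2, d3, d4, d5, d6⟩ := qcgd_dist hx1 hx2 h1 h2
        have hw : x * y = Equiv.swap a c * Equiv.swap (x a) (x c) := by
          rw [← hFp, ← mul_assoc, hx1, one_mul]
        have hwa : (x * y) a = c := by
          rw [hw, Equiv.Perm.mul_apply, Equiv.swap_apply_of_ne_of_ne d2 d3,
            Equiv.swap_apply_left]
        refine ⟨a, ?_, ?_⟩
        · rw [Equiv.Perm.mem_support, hwa]; exact h1
        · rw [hwa]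
      · rintro ⟨b, hb, heq⟩
        injection heq with e1 e2
        subst e1; subst e2
        rw [Equiv.Perm.mem_support] at hb
        have hne2 : (x * y) b ≠ x b := by
          intro h
          have hyy : y b = x ((x * y) b) := by
            rw [← Equiv.Perm.mul_apply, ← mul_assoc, hx1, one_mul]
          rw [h, qcgd_xx hx1] at hyy
          exact hy2 b hyy
        refine ⟨⟨hb, hne2⟩, ?_⟩
        rw [← qcgd_recon hx1 hx2 hw2 hcomm hsupp hb hne2, ← mul_assoc, hx1, one_mul]
    rw [himg, Finset.card_image_of_injOn (fun u _ v _ h => (Prod.ext_iff.mp h).1), hsupp]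
  have hcardT : T.card = 2 * n * (2 * n - 2) := by
    rw [Finset.card_eq_sum_card_fiberwise (f := Prod.fst) (t := Finset.univ)
      (fun p _ => Finset.mem_univ p.1)]
    have hfa : ∀ a : Fin (2 * n), (T.filter fun p => p.1 = a).card = 2 * n - 2 := by
      intro a
      have himg2 : T.filter (fun p => p.1 = a)
          = (Finset.univ \ {a, x a}).image (fun c => (a, c)) := by
        ext ⟨u, v⟩
        simp only [hT, Finset.mem_filter, Finset.filter_filter, Finset.mem_univ, true_and,
          Finset.mem_image, Finset.mem_sdiff, Finset.mem_insert, Finset.mem_singleton, not_or]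
        constructor
        · rintro ⟨⟨e1, e2⟩, rfl⟩
          exact ⟨v, ⟨e1, e2⟩, rfl⟩
        · rintro ⟨c, ⟨hc1, hc2⟩, heq⟩
          injection heq with e1 e2
          subst e1; subst e2
          exact ⟨⟨hc1, hc2⟩, rfl⟩
      rw [himg2, Finset.card_image_of_injective _ (fun u v h => (Prod.ext_iff.mp h).2),
        Finset.card_sdiff_of_subset (Finset.subset_univ _), Finset.card_univ, Fintype.card_fin]
      have : ({a, x a} : Finset (Fin (2 * n))).card = 2 := by
        rw [Finset.card_insert_of_notMem (by simp [(hx2 a).symm]), Finset.card_singleton]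
      rw [this]
    rw [Finset.sum_congr rfl (fun a _ => hfa a), Finset.sum_const, Finset.card_univ,
      Fintype.card_fin, smul_eq_mul]
  have hsum := Finset.card_eq_sum_card_fiberwise hmem
  rw [Finset.sum_congr rfl hfib, Finset.sum_const, smul_eq_mul, hcardT] at hsum
  obtain ⟨k, rfl⟩ : ∃ k, n = k + 2 := ⟨n - 2, by omega⟩
  have harith : 2 * (k + 2) * (2 * (k + 2) - 2) = ((k + 2) * (k + 2 - 1)) * 4 := by
    have e1 : 2 * (k + 2) - 2 = 2 * k + 2 := by omega
    have e2 : k + 2 - 1 = k + 1 := by omega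
    rw [e1, e2]; ring
  rw [harith] at hsum
  exact (Nat.eq_of_mul_eq_mul_right (by norm_num) hsum).symm
end
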